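/- arXiv:2212.04524 — 9 statements merged into one kernel-verified Lean document; each statement's English description precedes it below -/
import Mathlib

section
/- Let U, V, W : ℝ × ℝ → Matrix (Fin 2) (Fin 2) ℂ be such that: U is continuous and has a continuous partial derivative U_x in the second variable; V is continuous and has a continuous partial derivative V_t in the first variable; W has continuous partial derivatives W_t, W_x and continuous second-order mixed partial derivatives satisfying W_tx = W_xt everywhere. Assume the compatibility (zero-curvature) condition U_x(t,x) − V_t(t,x) + U(t,x)·V(t,x) − V(t,x)·U(t,x) = 0 holds for all (t,x) ∈ ℝ², that W_t(t,x) = U(t,x)·W(t,x) for all (t,x) ∈ ℝ², and that there exists t₀ ∈ ℝ with W_x(t₀,x) = V(t₀,x)·W(t₀,x) for all x ∈ ℝ. Then W_x(t,x) = V(t,x)·W(t,x) for all (t,x) ∈ ℝ². -/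
open Matrix

attribute [local instance] Matrix.normedAddCommGroup Matrix.normedSpace

private lemma mat_norm_mul_le (A B : Matrix (Fin 2) (Fin 2) ℂ) :
    ‖A * B‖ ≤ 2 * ‖A‖ * ‖B‖ := by
  have h2 : (0:ℝ) ≤ 2 * ‖A‖ * ‖B‖ := by positivity
  rw [Matrix.norm_le_iff h2]
  intro i j
  calc ‖(A * B) i j‖ = ‖∑ k, A i k * B k j‖ := by rw [Matrix.mul_apply]
    _ ≤ ∑ k, ‖A i k * B k j‖ := norm_sum_le _ _
    _ ≤ ∑ _k : Fin 2, ‖A‖ * ‖B‖ := by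
        refine Finset.sum_le_sum fun k _ => ?_
        calc ‖A i k * B k j‖ ≤ ‖A i k‖ * ‖B k j‖ := norm_mul_le _ _
          _ ≤ ‖A‖ * ‖B‖ := by
              have ha := Matrix.norm_entry_le_entrywise_sup_norm A (i := i) (j := k)
              have hb := Matrix.norm_entry_le_entrywise_sup_norm B (i := k) (j := j)
              exact mul_le_mul ha hb (norm_nonneg _) (norm_nonneg _)
    _ = 2 * ‖A‖ * ‖B‖ := by simp [Finset.sum_const]; ring

/-- Matrix multiplication as a continuous bilinear map. -/
private noncomputable def matMulCLM :
    Matrix (Fin 2) (Fin 2) ℂ →L[ℝ] Matrix (Fin 2) (Fin 2) ℂ →L[ℝ] Matrix (Fin 2) (Fin 2) ℂ :=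
  LinearMap.mkContinuous₂ (LinearMap.mul ℝ (Matrix (Fin 2) (Fin 2) ℂ)) 2 mat_norm_mul_le

private lemma matMulCLM_apply (A B : Matrix (Fin 2) (Fin 2) ℂ) : matMulCLM A B = A * B := rfl

/-- Product rule for matrix-valued curves. -/
private lemma HasDerivAt.mat_mul {f g : ℝ → Matrix (Fin 2) (Fin 2) ℂ}
    {f' g' : Matrix (Fin 2) (Fin 2) ℂ} {x : ℝ}
    (hf : HasDerivAt f f' x) (hg : HasDerivAt g g' x) :
    HasDerivAt (fun t => f t * g t) (f' * g x + f x * g') x := by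
  have h2 := matMulCLM.hasDerivAt_of_bilinear (fun _ => hf) (fun _ => hg)
  rw [show (f' * g x + f x * g') = matMulCLM (f x) g' + matMulCLM f' (g x) from add_comm _ _]
  exact h2

/-- **Lemma 2.1.** For a compatible AKNS system `W_t = U·W`, `W_x = V·W`
(zero-curvature condition `U_x − V_t + [U,V] = 0`), if `W` solves the
`t`-equation for all `x` and solves the `x`-equation at some time `t₀`,
then it solves the `x`-equation for all `t`. -/
theorem akns_x_equation_propagation
    (U V W Ux Vt Wt Wx Wtx Wxt : ℝ × ℝ → Matrix (Fin 2) (Fin 2) ℂ)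
    (hU : Continuous U) (hUx : Continuous Ux)
    (hV : Continuous V) (hVt : Continuous Vt)
    (hWt : Continuous Wt) (hWx : Continuous Wx)
    (hWtx : Continuous Wtx) (hWxt : Continuous Wxt)
    (hUx' : ∀ p : ℝ × ℝ, HasDerivAt (fun x => U (p.1, x)) (Ux p) p.2)
    (hVt' : ∀ p : ℝ × ℝ, HasDerivAt (fun t => V (t, p.2)) (Vt p) p.1)
    (hWt' : ∀ p : ℝ × ℝ, HasDerivAt (fun t => W (t, p.2)) (Wt p) p.1)
    (hWx' : ∀ p : ℝ × ℝ, HasDerivAt (fun x => W (p.1, x)) (Wx p) p.2)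
    (hWtx' : ∀ p : ℝ × ℝ, HasDerivAt (fun x => Wt (p.1, x)) (Wtx p) p.2)
    (hWxt' : ∀ p : ℝ × ℝ, HasDerivAt (fun t => Wx (t, p.2)) (Wxt p) p.1)
    (hmixed : ∀ p : ℝ × ℝ, Wtx p = Wxt p)
    (hZCC : ∀ p : ℝ × ℝ, Ux p - Vt p + (U p * V p - V p * U p) = 0)
    (hteq : ∀ p : ℝ × ℝ, Wt p = U p * W p)
    (t₀ : ℝ) (hxeq₀ : ∀ x : ℝ, Wx (t₀, x) = V (t₀, x) * W (t₀, x)) :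
    ∀ p : ℝ × ℝ, Wx p = V p * W p := by
  -- Step 1: Wtx = Ux·W + U·Wx everywhere (differentiate the t-equation in x).
  have hWtx_eq : ∀ p : ℝ × ℝ, Wtx p = Ux p * W p + U p * Wx p := by
    intro p
    have h2 : HasDerivAt (fun x => U (p.1, x) * W (p.1, x))
        (Ux p * W (p.1, p.2) + U (p.1, p.2) * Wx p) p.2 :=
      (hUx' p).mat_mul (hWx' p)
    have h3 : HasDerivAt (fun x => Wt (p.1, x))
        (Ux p * W (p.1, p.2) + U (p.1, p.2) * Wx p) p.2 := by
      have : (fun x => Wt (p.1, x)) = fun x => U (p.1, x) * W (p.1, x) := by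
        funext x; exact hteq (p.1, x)
      rw [this]; exact h2
    exact (hWtx' p).unique h3
  -- Step 2: the ODE for G := Wx - V·W in time.
  have hG' : ∀ p : ℝ × ℝ,
      HasDerivAt (fun t => Wx (t, p.2) - V (t, p.2) * W (t, p.2))
        (U p * (Wx p - V p * W p)) p.1 := by
    intro p
    have h1 : HasDerivAt (fun t => Wx (t, p.2) - V (t, p.2) * W (t, p.2))
        (Wxt p - (Vt p * W (p.1, p.2) + V (p.1, p.2) * Wt p)) p.1 :=
      (hWxt' p).sub ((hVt' p).mat_mul (hWt' p))
    have key : Ux p * W p - Vt p * W p + (U p * (V p * W p) - V p * (U p * W p)) = 0 := by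
      have : Ux p * W p - Vt p * W p + (U p * (V p * W p) - V p * (U p * W p))
          = (Ux p - Vt p + (U p * V p - V p * U p)) * W p := by noncomm_ring
      rw [this, hZCC p, Matrix.zero_mul]
    have heq : Wxt p - (Vt p * W p + V p * Wt p) = U p * (Wx p - V p * W p) := by
      rw [← hmixed p, hWtx_eq p, hteq p]
      have expand : Ux p * W p + U p * Wx p - (Vt p * W p + V p * (U p * W p))
          = U p * (Wx p - V p * W p)
            + (Ux p * W p - Vt p * W p + (U p * (V p * W p) - V p * (U p * W p))) := by
        noncomm_ring
      rw [expand, key, add_zero]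
    simpa only [heq] using h1
  -- Step 3: ODE uniqueness on a compact interval.
  rintro ⟨t, x⟩
  set a : ℝ := min t₀ t - 1 with ha
  set b : ℝ := max t₀ t + 1 with hb
  have ht₀ab : t₀ ∈ Set.Ioo a b := by
    constructor
    · have := min_le_left t₀ t; rw [ha]; linarith
    · have := le_max_left t₀ t; rw [hb]; linarith
  have htab : t ∈ Set.Icc a b := by
    constructor
    · have := min_le_right t₀ t; rw [ha]; linarith
    · have := le_max_right t₀ t; rw [hb]; linarith
  -- bound for U on the compact interval
  obtain ⟨C, hC⟩ : ∃ C, ∀ s ∈ Set.Icc a b, ‖U (s, x)‖ ≤ C := by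
    obtain ⟨C, hC⟩ := (isCompact_Icc (a := a) (b := b)).exists_bound_of_continuousOn
      ((hU.comp (continuous_id.prodMk continuous_const)).continuousOn)
    exact ⟨C, hC⟩
  have hC0 : 0 ≤ C := le_trans (norm_nonneg _) (hC a ⟨le_refl a, le_of_lt (ht₀ab.1.trans ht₀ab.2)⟩)
  -- clamped vector field
  set clamp : ℝ → ℝ := fun s => max a (min s b) with hclamp
  have hclampmem : ∀ s, clamp s ∈ Set.Icc a b := by
    intro s
    refine ⟨le_max_left _ _, max_le ?_ ?_⟩
    · exact le_of_lt (ht₀ab.1.trans ht₀ab.2)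
    · exact min_le_right _ _
  have hclampid : ∀ s ∈ Set.Ioo a b, clamp s = s := by
    intro s hs
    rw [hclamp]
    simp only []
    rw [min_eq_left hs.2.le, max_eq_right hs.1.le]
  set v : ℝ → Matrix (Fin 2) (Fin 2) ℂ → Matrix (Fin 2) (Fin 2) ℂ :=
    fun s y => U (clamp s, x) * y with hv
  have hK : ∀ s, LipschitzOnWith (2 * C).toNNReal (v s) Set.univ := by
    intro s
    apply LipschitzWith.lipschitzOnWith
    apply LipschitzWith.of_dist_le_mul
    intro y z
    rw [dist_eq_norm, dist_eq_norm, hv]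
    have : U (clamp s, x) * y - U (clamp s, x) * z = U (clamp s, x) * (y - z) := by
      rw [Matrix.mul_sub]
    rw [this]
    calc ‖U (clamp s, x) * (y - z)‖ ≤ 2 * ‖U (clamp s, x)‖ * ‖y - z‖ := mat_norm_mul_le _ _
      _ ≤ 2 * C * ‖y - z‖ := by
          have := hC _ (hclampmem s)
          gcongr
      _ = ((2 * C).toNNReal : ℝ) * ‖y - z‖ := by
          rw [Real.coe_toNNReal _ (by positivity)]
  have hcont : ContinuousOn (fun s : ℝ => Wx (s, x) - V (s, x) * W (s, x)) (Set.Icc a b) := by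
    apply ContinuousOn.sub
    · exact (hWx.comp (continuous_id.prodMk continuous_const)).continuousOn
    · apply ContinuousOn.mul
      · exact (hV.comp (continuous_id.prodMk continuous_const)).continuousOn
      · intro s _
        exact ((hWt' (s, x)).continuousAt).continuousWithinAt
  have main : Set.EqOn (fun s : ℝ => Wx (s, x) - V (s, x) * W (s, x))
      (fun _ => (0 : Matrix (Fin 2) (Fin 2) ℂ)) (Set.Icc a b) := by
    refine ODE_solution_unique_of_mem_Icc (fun s _ => hK s) ht₀ab hcont (fun s hs => ?_)
      (fun _ _ => Set.mem_univ _) continuousOn_const (fun s hs => ?_)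
      (fun _ _ => Set.mem_univ _) ?_
    · have := hG' (s, x)
      rw [hv]
      simp only [hclampid s hs]
      exact this
    · rw [hv]
      simpa using (hasDerivAt_const s (0 : Matrix (Fin 2) (Fin 2) ℂ))
    · simp only [hxeq₀ x, sub_self]
  have h0 : Wx (t, x) - V (t, x) * W (t, x) = 0 := main htab
  exact sub_eq_zero.mp h0
end

section
/- Let A₀ > 0 and ω₀ > 0 be real and set E := −ω₀/2 + i·A₀/2 ∈ ℂ. For λ ∈ ℝ define κ(λ) := ((λ − conj E)/(λ − E))^(1/4) using the principal branch of the complex power, a(λ) := (κ(λ) + κ(λ)⁻¹)/2, b(λ) := (κ(λ) − κ(λ)⁻¹)/2, and let w₀(λ) := √((λ + ω₀/2)² + A₀²/4) if λ ≥ −ω₀/2 and w₀(λ) := −√((λ + ω₀/2)² + A₀²/4) if λ < −ω₀/2. Then for every t ∈ ℝ and λ ∈ ℝ, the matrix function Φ(t) := !![e^{iω₀t/2}, 0; 0, e^{−iω₀t/2}] * !![a(λ), b(λ); b(λ), a(λ)] * !![e^{−i w₀(λ) t}, 0; 0, e^{i w₀(λ) t}] is differentiable in t and satisfies Φ'(t)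 = −(iλ·σ₃ + H₀(t))·Φ(t), where σ₃ = !![1,0;0,−1] and H₀(t) := (1/2)·!![0, A₀e^{iω₀t}; −A₀e^{−iω₀t}, 0]. -/
open Matrix
attribute [local instance] Matrix.normedAddCommGroup Matrix.normedSpace

lemma hasDerivAt_cexp_lin (c : ℂ) (t : ℝ) :
    HasDerivAt (fun s : ℝ => Complex.exp (c * s)) (c * Complex.exp (c * t)) t := by
  have h : HasDerivAt (fun s : ℝ => c * (s : ℂ)) c t := by
    simpa using (Complex.ofRealCLM.hasDerivAt (x := t)).const_mul c
  simpa [mul_comm] using h.cexp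

lemma hasDerivAt_matrix {f₁ f₂ f₃ f₄ : ℝ → ℂ} {f₁' f₂' f₃' f₄' : ℂ} {t : ℝ}
    (h₁ : HasDerivAt f₁ f₁' t) (h₂ : HasDerivAt f₂ f₂' t)
    (h₃ : HasDerivAt f₃ f₃' t) (h₄ : HasDerivAt f₄ f₄' t) :
    HasDerivAt (fun s => !![f₁ s, f₂ s; f₃ s, f₄ s]) !![f₁', f₂'; f₃', f₄'] t := by
  have key : ∀ (x₁ x₂ x₃ x₄ : ℂ), !![x₁, x₂; x₃, x₄] =
      x₁ • !![1,0;0,0] + x₂ • !![0,1;0,0] + x₃ • !![0,0;1,0] + x₄ • !![0,0;0,(1:ℂ)] := by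
    intro x₁ x₂ x₃ x₄
    ext i j
    fin_cases i <;> fin_cases j <;> simp
  rw [key f₁' f₂' f₃' f₄']
  exact ((((h₁.smul_const _).add (h₂.smul_const _)).add (h₃.smul_const _)).add
    (h₄.smul_const _)).congr_of_eventuallyEq (.of_forall fun s => key _ _ _ _)

open Complex in
lemma kappa_sq (A₀ μ w : ℝ) (hA : 0 < A₀) (hw2 : w^2 = μ^2 + A₀^2/4)
    (hsign : 0 ≤ μ ↔ 0 < w) :
    ((((μ:ℂ) + Complex.I*A₀/2) / ((μ:ℂ) - Complex.I*A₀/2)) ^ ((1:ℂ)/4))^2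
      = ((μ:ℂ) + Complex.I*A₀/2) / w := by
  have hw0 : w ≠ 0 := by
    intro h; rw [h] at hw2; nlinarith
  have hwc : (w:ℂ) ≠ 0 := Complex.ofReal_ne_zero.2 hw0
  have hnum : ((μ:ℂ) + Complex.I*A₀/2) ≠ 0 := by
    intro h
    have := congrArg Complex.im h
    simp at this
    linarith
  have hden : ((μ:ℂ) - Complex.I*A₀/2) ≠ 0 := by
    intro h
    have := congrArg Complex.im h
    simp at this
    linarith
  set c : ℂ := ((w⁻¹ : ℝ) : ℂ) * ((μ:ℂ) + Complex.I*A₀/2) with hc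
  have hcre : c.re = w⁻¹ * μ := by
    rw [hc, Complex.re_ofReal_mul]
    congr 1
    simp
  have hcim : c.im = w⁻¹ * (A₀/2) := by
    rw [hc, Complex.im_ofReal_mul]
    congr 1
    simp
  have hcd : c = ((μ:ℂ) + Complex.I*A₀/2) / w := by
    rw [hc, Complex.ofReal_inv, ← div_eq_inv_mul]
  have hw2c : (w:ℂ)^2 = (μ:ℂ)^2 + (A₀:ℂ)^2/4 := by exact_mod_cast hw2
  have hz : (((μ:ℂ) + Complex.I*A₀/2) / ((μ:ℂ) - Complex.I*A₀/2)) = c^2 := by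
    rw [hcd, div_pow, div_eq_div_iff hden (pow_ne_zero 2 hwc)]
    linear_combination (((μ:ℂ) + Complex.I*A₀/2)) * hw2c + ((μ:ℂ) + Complex.I*A₀/2) * ((A₀:ℂ)^2/4) * Complex.I_sq
  have hc0 : c ≠ 0 := by
    rw [hcd]; exact div_ne_zero hnum hwc
  have harg1 : -(Real.pi / 2) < c.arg ∧ c.arg ≤ Real.pi / 2 := by
    rcases le_or_gt 0 μ with h | h
    · have hw : 0 < w := hsign.1 h
      constructor
      · exact Complex.neg_pi_div_two_lt_arg_iff.2 (Or.inr (by rw [hcim]; positivity))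
      · exact Complex.arg_le_pi_div_two_iff.2 (Or.inl (by rw [hcre]; positivity))
    · have hw : w < 0 := by
        rcases lt_trichotomy w 0 with h' | h' | h'
        · exact h'
        · exact absurd h' hw0
        · exact absurd (hsign.2 h') (not_le.2 h)
      have hre : 0 < c.re := by
        rw [hcre]
        have : w⁻¹ < 0 := inv_neg''.2 hw
        nlinarith
      exact ⟨Complex.neg_pi_div_two_lt_arg_iff.2 (Or.inl hre),
        Complex.arg_le_pi_div_two_iff.2 (Or.inl hre.le)⟩
  have hz0 : (((μ:ℂ) + Complex.I*A₀/2) / ((μ:ℂ) - Complex.I*A₀/2)) ≠ 0 :=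
    div_ne_zero hnum hden
  have step : ((((μ:ℂ) + Complex.I*A₀/2) / ((μ:ℂ) - Complex.I*A₀/2)) ^ ((1:ℂ)/4))^2
      = (((μ:ℂ) + Complex.I*A₀/2) / ((μ:ℂ) - Complex.I*A₀/2)) ^ ((1:ℂ)/2) := by
    rw [sq, ← Complex.cpow_add _ _ hz0]
    norm_num
  rw [step, hz, hcd.symm]
  have := Complex.pow_cpow_ofNat_inv (x := c) (n := 2) (by simpa using harg1.1) (by simpa using harg1.2)
  simpa [show ((1:ℂ)/2) = ((2:ℂ))⁻¹ by norm_num] using this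


/-- The matrix function
`Φ(t) = e^{−i Re E · t σ₃} · M₀(λ) · e^{−i w(λ) t σ₃}` solves the `t`-equation
`Φ' = −(iλσ₃ + H₀(t))Φ` of the AKNS system, where `H₀` is built from the
periodic input signal `A₀ e^{iω₀ t}`. -/
theorem background_solution_solves_t_equation
    (A₀ ω₀ : ℝ) (hA : 0 < A₀) (hω : 0 < ω₀) (lam : ℝ) :
    let E : ℂ := -(ω₀ : ℂ) / 2 + Complex.I * (A₀ : ℂ) / 2
    let κ : ℂ := (((lam : ℂ) - (starRingEnd ℂ) E) / ((lam : ℂ) - E)) ^ ((1 : ℂ) / 4)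
    let a : ℂ := (κ + κ⁻¹) / 2
    let b : ℂ := (κ - κ⁻¹) / 2
    let w₀ : ℝ := if -ω₀ / 2 ≤ lam
      then Real.sqrt ((lam + ω₀ / 2) ^ 2 + A₀ ^ 2 / 4)
      else -Real.sqrt ((lam + ω₀ / 2) ^ 2 + A₀ ^ 2 / 4)
    let σ₃ : Matrix (Fin 2) (Fin 2) ℂ := !![1, 0; 0, -1]
    let H₀ : ℝ → Matrix (Fin 2) (Fin 2) ℂ := fun t =>
      (1 / 2 : ℂ) • !![0, (A₀ : ℂ) * Complex.exp (Complex.I * (ω₀ : ℂ) * t);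
        -(A₀ : ℂ) * Complex.exp (-(Complex.I * (ω₀ : ℂ) * t)), 0]
    let Φ : ℝ → Matrix (Fin 2) (Fin 2) ℂ := fun t =>
      !![Complex.exp (Complex.I * (ω₀ : ℂ) * t / 2), 0;
         0, Complex.exp (-(Complex.I * (ω₀ : ℂ) * t / 2))] *
      !![a, b; b, a] *
      !![Complex.exp (-(Complex.I * (w₀ : ℂ) * t)), 0;
         0, Complex.exp (Complex.I * (w₀ : ℂ) * t)]
    ∀ t : ℝ,
      HasDerivAt Φ (-((Complex.I * (lam : ℂ)) • σ₃ + H₀ t) * Φ t) t := by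
  intro Ee κ a b w₀ σ₃ H₀ Φ t
  have hr : 0 < (lam + ω₀/2)^2 + A₀^2/4 := by positivity
  have hw2 : w₀^2 = (lam + ω₀/2)^2 + A₀^2/4 := by
    unfold w₀
    split_ifs
    · exact Real.sq_sqrt hr.le
    · rw [neg_pow]; simp [Real.sq_sqrt hr.le]
  have hsqrtpos : 0 < Real.sqrt ((lam + ω₀/2)^2 + A₀^2/4) := Real.sqrt_pos.2 hr
  have hsign : 0 ≤ lam + ω₀/2 ↔ 0 < w₀ := by
    unfold w₀
    split_ifs with h
    · exact ⟨fun _ => hsqrtpos, fun _ => by linarith⟩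
    · constructor
      · intro h'; push_neg at h; linarith
      · intro h'; linarith
  have hw0 : w₀ ≠ 0 := by intro h; rw [h] at hw2; nlinarith
  have hwc : (w₀:ℂ) ≠ 0 := Complex.ofReal_ne_zero.2 hw0
  have hκeq : κ = ((((lam + ω₀/2 : ℝ):ℂ) + Complex.I*A₀/2) / (((lam + ω₀/2 : ℝ):ℂ) - Complex.I*A₀/2)) ^ ((1:ℂ)/4) := by
    have h1 : (starRingEnd ℂ) Ee = -(ω₀:ℂ)/2 - Complex.I*A₀/2 := by
      unfold Ee
      refine Complex.ext ?_ ?_ <;> · simp [Complex.div_re, Complex.div_im]; ring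
    unfold κ
    rw [h1]
    congr 2 <;> (dsimp -failIfUnchanged only [Ee]; push_cast; ring)
  have hκ2 : κ^2 = (((lam + ω₀/2 : ℝ):ℂ) + Complex.I*A₀/2) / (w₀:ℂ) := by
    rw [hκeq]; exact kappa_sq A₀ (lam + ω₀/2) w₀ hA hw2 hsign
  have hnum : (((lam + ω₀/2 : ℝ):ℂ) + Complex.I*A₀/2) ≠ 0 := by
    intro h
    have := congrArg Complex.im h
    simp at this
    linarith
  have hκ0 : κ ≠ 0 := by
    intro h
    rw [h] at hκ2
    have h2 : ((((lam + ω₀/2 : ℝ):ℂ) + Complex.I*A₀/2) / (w₀:ℂ)) = 0 := by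
      rw [← hκ2]; ring
    rcases div_eq_zero_iff.1 h2 with h' | h'
    · exact hnum h'
    · exact hwc h'
  have hκ2' : κ^2 * (w₀:ℂ) = ((lam + ω₀/2 : ℝ):ℂ) + Complex.I*A₀/2 := by
    rw [hκ2, div_mul_cancel₀ _ hwc]
  have hw2c : ((w₀:ℝ):ℂ)^2 = ((lam + ω₀/2 : ℝ):ℂ)^2 + ((A₀:ℝ):ℂ)^2/4 := by exact_mod_cast hw2
  -- the two key algebraic identities
  have hI : Complex.I*(((lam + ω₀/2 : ℝ):ℂ) - w₀)*a = -((A₀:ℂ)/2)*b := by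
    unfold a b
    field_simp
    push_cast at hκ2' hw2c ⊢
    apply mul_left_cancel₀ hwc
    linear_combination (2*(Complex.I*((lam:ℂ) + ω₀/2 - w₀) + A₀/2)) * hκ2'
      - (2*Complex.I) * hw2c
      + ((A₀:ℂ)*((lam:ℂ) + ω₀/2 - w₀)) * Complex.I_sq
  have hII : Complex.I*(((lam + ω₀/2 : ℝ):ℂ) + w₀)*b = -((A₀:ℂ)/2)*a := by
    unfold a b
    field_simp
    push_cast at hκ2' hw2c ⊢
    apply mul_left_cancel₀ hwc
    linear_combination (2*(Complex.I*((lam:ℂ) + ω₀/2 + w₀) + A₀/2)) * hκ2'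
      - (2*Complex.I) * hw2c
      + ((A₀:ℂ)*((lam:ℂ) + ω₀/2 + w₀)) * Complex.I_sq
  -- exponential product identities
  have hE1 : Complex.exp (Complex.I * (ω₀:ℂ) * (t:ℂ)) *
      Complex.exp (-(Complex.I * ((ω₀:ℂ)/2 + (w₀:ℂ)) * (t:ℂ)))
      = Complex.exp ((Complex.I * ((ω₀:ℂ)/2 - (w₀:ℂ))) * (t:ℂ)) := by
    rw [← Complex.exp_add]; congr 1; ring
  have hE2 : Complex.exp (Complex.I * (ω₀:ℂ) * (t:ℂ)) *
      Complex.exp (-(Complex.I * ((ω₀:ℂ)/2 - (w₀:ℂ)) * (t:ℂ)))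
      = Complex.exp ((Complex.I * ((ω₀:ℂ)/2 + (w₀:ℂ))) * (t:ℂ)) := by
    rw [← Complex.exp_add]; congr 1; ring
  have hE3 : Complex.exp (-(Complex.I * (ω₀:ℂ) * (t:ℂ))) *
      Complex.exp ((Complex.I * ((ω₀:ℂ)/2 - (w₀:ℂ))) * (t:ℂ))
      = Complex.exp (-(Complex.I * ((ω₀:ℂ)/2 + (w₀:ℂ)) * (t:ℂ))) := by
    rw [← Complex.exp_add]; congr 1; ring
  have hE4 : Complex.exp (-(Complex.I * (ω₀:ℂ) * (t:ℂ))) *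
      Complex.exp ((Complex.I * ((ω₀:ℂ)/2 + (w₀:ℂ))) * (t:ℂ))
      = Complex.exp (-(Complex.I * ((ω₀:ℂ)/2 - (w₀:ℂ)) * (t:ℂ))) := by
    rw [← Complex.exp_add]; congr 1; ring
  -- rewrite Φ entrywise
  have hmul : ∀ (x y z : ℂ), Complex.exp x * z * Complex.exp y = z * Complex.exp (x + y) := by
    intro x y z; rw [Complex.exp_add]; ring
  have hΦ : Φ = fun s : ℝ =>
      !![a * Complex.exp ((Complex.I * ((ω₀:ℂ)/2 - (w₀:ℂ))) * (s:ℂ)),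
         b * Complex.exp ((Complex.I * ((ω₀:ℂ)/2 + (w₀:ℂ))) * (s:ℂ));
         b * Complex.exp ((-(Complex.I * ((ω₀:ℂ)/2 + (w₀:ℂ)))) * (s:ℂ)),
         a * Complex.exp ((-(Complex.I * ((ω₀:ℂ)/2 - (w₀:ℂ)))) * (s:ℂ))] := by
    funext s
    unfold Φ
    ext i j
    fin_cases i <;> fin_cases j <;>
      · simp [Matrix.mul_apply, Fin.sum_univ_two]
        rw [hmul]
        congr 2
        push_cast
        ring
  have hD : HasDerivAt Φ
      !![a * (Complex.I * ((ω₀:ℂ)/2 - (w₀:ℂ)) *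
            Complex.exp ((Complex.I * ((ω₀:ℂ)/2 - (w₀:ℂ))) * (t:ℂ))),
         b * (Complex.I * ((ω₀:ℂ)/2 + (w₀:ℂ)) *
            Complex.exp ((Complex.I * ((ω₀:ℂ)/2 + (w₀:ℂ))) * (t:ℂ)));
         b * (-(Complex.I * ((ω₀:ℂ)/2 + (w₀:ℂ))) *
            Complex.exp ((-(Complex.I * ((ω₀:ℂ)/2 + (w₀:ℂ)))) * (t:ℂ))),
         a * (-(Complex.I * ((ω₀:ℂ)/2 - (w₀:ℂ))) *
            Complex.exp ((-(Complex.I * ((ω₀:ℂ)/2 - (w₀:ℂ)))) * (t:ℂ)))] t := by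
    rw [hΦ]
    exact hasDerivAt_matrix
      ((hasDerivAt_cexp_lin _ t).const_mul a)
      ((hasDerivAt_cexp_lin _ t).const_mul b)
      ((hasDerivAt_cexp_lin _ t).const_mul b)
      ((hasDerivAt_cexp_lin _ t).const_mul a)
  convert hD using 1
  rw [hΦ]
  ext i j
  unfold H₀ σ₃
  fin_cases i <;> fin_cases j
  · simp [Matrix.mul_apply, Fin.sum_univ_two]
    push_cast at hI hII ⊢
    linear_combination (-(Complex.exp ((Complex.I * ((ω₀:ℂ)/2 - (w₀:ℂ))) * (t:ℂ)))) * hI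
      - ((A₀:ℂ)/2) * b * hE1
  · simp [Matrix.mul_apply, Fin.sum_univ_two]
    push_cast at hI hII ⊢
    linear_combination (-(Complex.exp ((Complex.I * ((ω₀:ℂ)/2 + (w₀:ℂ))) * (t:ℂ)))) * hII
      - ((A₀:ℂ)/2) * a * hE2
  · simp [Matrix.mul_apply, Fin.sum_univ_two]
    push_cast at hI hII ⊢
    linear_combination (Complex.exp (-(Complex.I * ((ω₀:ℂ)/2 + (w₀:ℂ)) * (t:ℂ)))) * hII
      + ((A₀:ℂ)/2) * a * hE3
  · simp [Matrix.mul_apply, Fin.sum_univ_two]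
    push_cast at hI hII ⊢
    linear_combination (Complex.exp (-(Complex.I * ((ω₀:ℂ)/2 - (w₀:ℂ)) * (t:ℂ)))) * hI
      + ((A₀:ℂ)/2) * b * hE4
end

section
/- Let A₀ > 0 and ω₀ > 0 be real and set E := −ω₀/2 + i·A₀/2. For λ ∈ ℝ define κ(λ) := ((λ − conj E)/(λ − E))^(1/4) using the principal branch of the complex power, a(λ) := (κ(λ) + κ(λ)⁻¹)/2, b(λ) := (κ(λ) − κ(λ)⁻¹)/2, and let w₀(λ) := √((λ + ω₀/2)² + A₀²/4) if λ ≥ −ω₀/2 and w₀(λ) := −√((λ + ω₀/2)² + A₀²/4) if λ < −ω₀/2. Then for every λ ∈ ℝ: a(λ)² − b(λ)² = 1, a(λ)² + b(λ)² = (λ + ω₀/2)/w₀(λ), and a(λ)·b(λ) = i·(A₀/2)/(2·w₀(λ)). -/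
open Complex Real

/-- Identities for the spectral functions `a`, `b`:
`a² − b² = 1`, `a² + b² = (λ − Re E)/w(λ)` and `a·b = i·Im E/(2w(λ))`,
where `E = −ω₀/2 + i·A₀/2`. -/
theorem spectral_function_identities
    (A₀ ω₀ : ℝ) (hA : 0 < A₀) (hω : 0 < ω₀) :
    let E : ℂ := -(ω₀ : ℂ) / 2 + Complex.I * (A₀ : ℂ) / 2
    let κ : ℝ → ℂ := fun lam =>
      (((lam : ℂ) - (starRingEnd ℂ) E) / ((lam : ℂ) - E)) ^ ((1 : ℂ) / 4)
    let a : ℝ → ℂ := fun lam => (κ lam + (κ lam)⁻¹) / 2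
    let b : ℝ → ℂ := fun lam => (κ lam - (κ lam)⁻¹) / 2
    let w₀ : ℝ → ℝ := fun lam => if -ω₀ / 2 ≤ lam
      then Real.sqrt ((lam + ω₀ / 2) ^ 2 + A₀ ^ 2 / 4)
      else -Real.sqrt ((lam + ω₀ / 2) ^ 2 + A₀ ^ 2 / 4)
    ∀ lam : ℝ,
      a lam ^ 2 - b lam ^ 2 = 1 ∧
      a lam ^ 2 + b lam ^ 2 = (((lam + ω₀ / 2 : ℝ)) : ℂ) / ((w₀ lam : ℝ) : ℂ) ∧
      a lam * b lam = Complex.I * ((A₀ : ℂ) / 2) / (2 * ((w₀ lam : ℝ) : ℂ)) := by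
  intro E κ a b w₀ lam
  -- basic real quantities
  set x : ℝ := lam + ω₀ / 2 with hxdef
  have hr2 : (0:ℝ) < x ^ 2 + A₀ ^ 2 / 4 := by positivity
  set r : ℝ := Real.sqrt (x ^ 2 + A₀ ^ 2 / 4) with hrdef
  have hr : 0 < r := Real.sqrt_pos.mpr hr2
  have hrsq : r ^ 2 = x ^ 2 + A₀ ^ 2 / 4 := Real.sq_sqrt hr2.le
  -- w₀ lam in terms of x
  have hw : w₀ lam = if 0 ≤ x then r else -r := by
    have hiff : (-ω₀ / 2 ≤ lam) ↔ (0 ≤ x) := by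
      constructor <;> intro h <;> (simp only [hxdef] at *) <;> linarith
    simp only [w₀, hrdef, hxdef]
    rw [if_congr hiff rfl rfl]
  set w : ℝ := w₀ lam with hwdef
  have hwne : w ≠ 0 := by
    rw [hw]; split
    · exact hr.ne'
    · exact (neg_lt_zero.mpr hr).ne
  have hwsq : w ^ 2 = r ^ 2 := by
    rw [hw]; split <;> ring
  have hWne : ((w:ℂ)) ≠ 0 := by exact_mod_cast hwne
  -- complex quantities
  set p : ℂ := (lam : ℂ) - (starRingEnd ℂ) E with hpdef
  set q : ℂ := (lam : ℂ) - E with hqdef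
  have hpc : p = ((x : ℝ) : ℂ) + ((A₀ / 2 : ℝ) : ℂ) * Complex.I := by
    simp only [hpdef, E, map_add, map_div₀, map_neg, map_mul, Complex.conj_ofReal,
      Complex.conj_I, map_ofNat]
    push_cast [hxdef]
    ring
  have hqc : q = ((x : ℝ) : ℂ) - ((A₀ / 2 : ℝ) : ℂ) * Complex.I := by
    simp only [hqdef, E]
    push_cast [hxdef]
    ring
  have hpre : p.re = x := by rw [hpc]; simp
  have hpim : p.im = A₀ / 2 := by rw [hpc]; simp
  have hqre : q.re = x := by rw [hqc]; simp
  have hqim : q.im = -(A₀ / 2) := by rw [hqc]; simp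
  have hpne : p ≠ 0 := fun h => by rw [h] at hpim; simp at hpim; linarith
  have hqne : q ≠ 0 := fun h => by rw [h] at hqim; simp at hqim; linarith
  have hpq : p * q = ((r ^ 2 : ℝ) : ℂ) := by
    rw [hpc, hqc, hrsq]
    push_cast
    linear_combination (-(A₀ : ℂ) ^ 2 / 4) * Complex.I_sq
  set z : ℂ := p / q with hzdef
  have hzne : z ≠ 0 := div_ne_zero hpne hqne
  -- the explicit square root candidate
  set c : ℂ := p / (w : ℂ) with hcdef
  have hcre : c.re = x / w := by rw [hcdef, Complex.div_ofReal_re, hpre]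
  have hcim : c.im = (A₀ / 2) / w := by rw [hcdef, Complex.div_ofReal_im, hpim]
  have hwsqC : ((w:ℂ)) ^ 2 = p * q := by
    rw [hpq]; push_cast [← hwsq]; ring
  have hcsq : c ^ 2 = z := by
    rw [hcdef, hzdef, div_pow, hwsqC]
    field_simp
  -- κ and its fourth power
  have hκeq : κ lam = z ^ ((1:ℂ)/4) := rfl
  have hκne : κ lam ≠ 0 := by
    rw [hκeq]
    simp [Complex.cpow_eq_zero_iff, hzne]
  have hκ2 : κ lam ^ 2 = Complex.exp (Complex.log z * (1/2)) := by
    rw [hκeq, Complex.cpow_def_of_ne_zero hzne, ← Complex.exp_nat_mul]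
    congr 1
    push_cast
    ring
  have himarg : (Complex.log z * (1/2)).im = (Complex.log z).im / 2 := by
    simp [Complex.mul_im]
    ring
  have harg1 : -(π/2) < (Complex.log z * (1/2)).im := by
    rw [himarg]
    have := Complex.neg_pi_lt_log_im z
    linarith
  have harg2 : (Complex.log z * (1/2)).im ≤ π/2 := by
    rw [himarg]
    have := Complex.log_im_le_pi z
    linarith
  have hre_nonneg : 0 ≤ (κ lam ^ 2).re := by
    rw [hκ2, Complex.exp_re]
    have h1 := Real.cos_nonneg_of_mem_Icc ⟨harg1.le, harg2⟩
    positivity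
  have him_pos : (κ lam ^ 2).re = 0 → 0 < (κ lam ^ 2).im := by
    intro h0
    rw [hκ2, Complex.exp_re] at h0
    have hexp : (0:ℝ) < Real.exp (Complex.log z * (1/2)).re := Real.exp_pos _
    have hcos : Real.cos (Complex.log z * (1/2)).im = 0 := by
      rcases mul_eq_zero.mp h0 with h | h
      · exact absurd h hexp.ne'
      · exact h
    have hpi2 : (Complex.log z * (1/2)).im = π/2 := by
      by_contra hne
      have hlt : (Complex.log z * (1/2)).im < π/2 := lt_of_le_of_ne harg2 hne
      exact absurd hcos (ne_of_gt (Real.cos_pos_of_mem_Ioo ⟨harg1, hlt⟩))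
    rw [hκ2, Complex.exp_im, hpi2, Real.sin_pi_div_two, mul_one]
    exact hexp
  -- κ² is a square root of z, hence equals ±c
  have hκ4 : (κ lam ^ 2) ^ 2 = z := by
    rw [← pow_mul, hκeq]
    rw [show ((1:ℂ)/4) = ((4:ℕ) : ℂ)⁻¹ by norm_num]
    exact Complex.cpow_nat_inv_pow z (by norm_num)
  have hor : κ lam ^ 2 = c ∨ κ lam ^ 2 = -c := by
    have hfac : (κ lam ^ 2 - c) * (κ lam ^ 2 + c) = 0 := by
      have h := hκ4.trans hcsq.symm
      linear_combination h
    rcases mul_eq_zero.mp hfac with h | h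
    · left; exact sub_eq_zero.mp h
    · right; exact eq_neg_of_add_eq_zero_left h
  -- real part of c is nonnegative
  have hxw_nonneg : 0 ≤ x / w := by
    rcases le_or_gt 0 x with hx | hx
    · have hwr : w = r := by rw [hw, if_pos hx]
      rw [hwr]; exact div_nonneg hx hr.le
    · have hwr : w = -r := by rw [hw, if_neg (not_le.mpr hx)]
      rw [hwr, div_neg, ← neg_div]
      exact div_nonneg (by linarith) hr.le
  -- rule out the negative root
  have hκ2c : κ lam ^ 2 = c := by
    rcases hor with h | h
    · exact h
    · exfalso
      have hre : (κ lam ^ 2).re = -(x / w) := by rw [h, Complex.neg_re, hcre]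
      have hx0 : x / w = 0 := le_antisymm (by rw [hre] at hre_nonneg; linarith) hxw_nonneg
      have him := him_pos (by rw [hre, hx0, neg_zero])
      have hxz : x = 0 := by
        rcases div_eq_zero_iff.mp hx0 with h' | h'
        · exact h'
        · exact absurd h' hwne
      have hwr : w = r := by rw [hw, if_pos (le_of_eq hxz.symm)]
      have himc : (κ lam ^ 2).im = -((A₀ / 2) / w) := by rw [h, Complex.neg_im, hcim]
      rw [himc, hwr] at him
      have hpos : 0 < (A₀ / 2) / r := by positivity
      linarith
  -- the inverse square
  have hκi2 : (κ lam)⁻¹ ^ 2 = q / (w : ℂ) := by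
    rw [inv_pow, hκ2c, hcdef, inv_div, div_eq_div_iff hpne hWne]
    linear_combination hwsqC
  have hsum : p + q = 2 * ((x : ℝ) : ℂ) := by rw [hpc, hqc]; ring
  have hdiff : p - q = 2 * ((A₀ / 2 : ℝ) : ℂ) * Complex.I := by rw [hpc, hqc]; ring
  refine ⟨?_, ?_, ?_⟩
  · simp only [a, b]
    field_simp
    ring
  · have e1 : a lam ^ 2 + b lam ^ 2 = (κ lam ^ 2 + (κ lam)⁻¹ ^ 2) / 2 := by
      simp only [a, b]; ring
    rw [e1, hκ2c, hκi2, hcdef, ← add_div, hsum]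
    ring
  · have e2 : a lam * b lam = (κ lam ^ 2 - (κ lam)⁻¹ ^ 2) / 4 := by
      simp only [a, b]; ring
    rw [e2, hκ2c, hκi2, hcdef, div_sub_div_same, hdiff]
    push_cast
    ring
end

section
/- Let A₀ > 0 and ω₀ > 0 be real and set E := −ω₀/2 + i·A₀/2. For every z ∈ ℂ with z ≠ E and z ≠ conj E, let κ(z) := ((z − conj E)/(z − E))^(1/4) using the principal branch of the complex power. Then κ(z) ≠ 0 and a(z) := (κ(z) + κ(z)⁻¹)/2 ≠ 0. -/
lemma cpow_quarter_re_pos {w : ℂ} (hw : w ≠ 0) : 0 < (w ^ ((1 : ℂ)/4)).re := by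
  rw [Complex.cpow_def_of_ne_zero hw, Complex.exp_re]
  apply mul_pos (Real.exp_pos _)
  have him : (Complex.log w * ((1 : ℂ)/4)).im = w.arg / 4 := by
    simp [Complex.mul_im, Complex.log_im]
    ring
  rw [him]
  apply Real.cos_pos_of_mem_Ioo
  constructor
  · have := Complex.neg_pi_lt_arg w
    have hpi := Real.pi_pos
    nlinarith
  · have := Complex.arg_le_pi w
    have hpi := Real.pi_pos
    nlinarith

/-- The spectral function `a(z) = (κ(z) + κ(z)⁻¹)/2`, with
`κ(z) = ((z − conj E)/(z − E))^{1/4}`, has no zeros (and `κ(z) ≠ 0`)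
for `z ≠ E`, `z ≠ conj E`; hence the discrete spectrum is empty. -/
theorem spectral_function_a_nonvanishing
    (A₀ ω₀ : ℝ) (hA : 0 < A₀) (hω : 0 < ω₀) :
    let E : ℂ := -(ω₀ : ℂ) / 2 + Complex.I * (A₀ : ℂ) / 2
    ∀ z : ℂ, z ≠ E → z ≠ (starRingEnd ℂ) E →
      let κ : ℂ := ((z - (starRingEnd ℂ) E) / (z - E)) ^ ((1 : ℂ) / 4)
      κ ≠ 0 ∧ (κ + κ⁻¹) / 2 ≠ 0 := by
  intro E z hzE hzE' κ
  have hw : (z - (starRingEnd ℂ) E) / (z - E) ≠ 0 :=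
    div_ne_zero (sub_ne_zero.mpr hzE') (sub_ne_zero.mpr hzE)
  have hre : 0 < κ.re := cpow_quarter_re_pos hw
  have hκ : κ ≠ 0 := fun h => by simp [h] at hre
  refine ⟨hκ, ?_⟩
  have hsum : 0 < (κ + κ⁻¹).re := by
    rw [Complex.add_re, Complex.inv_re]
    have hnsq : 0 < Complex.normSq κ := Complex.normSq_pos.mpr hκ
    positivity
  intro h
  rw [div_eq_zero_iff] at h
  rcases h with h | h
  · rw [h] at hsum; simp at hsum
  · norm_num at h
end

section
/- Let A₀ > 0 and ω₀ > 0 be real and set E := −ω₀/2 + i·A₀/2. For λ ∈ ℝ define κ(λ) := ((λ − conj E)/(λ − E))^(1/4) using the principal branch of the complex power, a(λ) := (κ(λ) + κ(λ)⁻¹)/2, b(λ) := (κ(λ) − κ(λ)⁻¹)/2, and let w₀(λ) := √((λ + ω₀/2)² + A₀²/4) if λ ≥ −ω₀/2 and w₀(λ) := −√((λ + ω₀/2)² + A₀²/4) if λ < −ω₀/2. Then for every λ ∈ ℝ, a(λ) ≠ 0 and b(λ)/a(λ) = i·(w₀(λ) − λ − ω₀/2)/(A₀/2). -/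
open Complex Real

/-- The principal square root `z ^ (1/2)` has nonneg real part, and if the real
part vanishes the imaginary part is nonneg. -/
lemma aux_cpow_half_props (z : ℂ) (hz : z ≠ 0) :
    0 ≤ (z ^ ((1:ℂ)/2)).re ∧ ((z ^ ((1:ℂ)/2)).re = 0 → 0 ≤ (z ^ ((1:ℂ)/2)).im) := by
  rw [Complex.cpow_def_of_ne_zero hz]
  have hre : (Complex.log z * ((1:ℂ)/2)).re = (Complex.log z).re / 2 := by
    simp [Complex.mul_re]; ring
  have him : (Complex.log z * ((1:ℂ)/2)).im = z.arg / 2 := by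
    simp [Complex.mul_im, Complex.log_im]; ring
  rw [Complex.exp_re, Complex.exp_im, hre, him]
  have h1 : -Real.pi < z.arg := Complex.neg_pi_lt_arg z
  have h2 : z.arg ≤ Real.pi := Complex.arg_le_pi z
  have hpi := Real.pi_pos
  have hcos : 0 ≤ Real.cos (z.arg / 2) :=
    Real.cos_nonneg_of_mem_Icc ⟨by linarith, by linarith⟩
  have hexp : 0 < Real.exp ((Complex.log z).re / 2) := Real.exp_pos _
  constructor
  · positivity
  · intro h0
    have hc0 : Real.cos (z.arg / 2) = 0 := by
      rcases mul_eq_zero.mp h0 with h | h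
      · exact absurd h (ne_of_gt hexp)
      · exact h
    have harg : z.arg / 2 = Real.pi / 2 := by
      by_contra hne
      have hlt : z.arg / 2 < Real.pi / 2 := lt_of_le_of_ne (by linarith) hne
      have := Real.cos_pos_of_mem_Ioo (show z.arg / 2 ∈ Set.Ioo (-(Real.pi/2)) (Real.pi/2) from ⟨by linarith, hlt⟩)
      linarith
    rw [harg, Real.sin_pi_div_two]
    positivity

/-- Pinning lemma: if `s ^ 2 = z` and `s` is in the right half plane (or positive
imaginary axis), then `z ^ (1/2) = s`. -/
lemma aux_cpow_half_eq (z s : ℂ) (hz : z ≠ 0) (hs : s ^ 2 = z)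
    (h : 0 < s.re ∨ (s.re = 0 ∧ 0 < s.im)) : z ^ ((1:ℂ)/2) = s := by
  have ht2 : (z ^ ((1:ℂ)/2)) ^ 2 = z := by
    rw [sq, ← Complex.cpow_add _ _ hz]; norm_num
  obtain ⟨hre, him⟩ := aux_cpow_half_props z hz
  set t := z ^ ((1:ℂ)/2) with ht
  have hfac : (t - s) * (t + s) = 0 := by linear_combination ht2 - hs
  rcases mul_eq_zero.mp hfac with h1 | h1
  · exact sub_eq_zero.mp h1
  · exfalso
    have hts : t = -s := eq_neg_of_add_eq_zero_left h1
    rcases h with hpos | ⟨h0, hipos⟩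
    · rw [hts] at hre
      simp only [Complex.neg_re] at hre
      linarith
    · have h2 : t.re = 0 := by rw [hts]; simp [h0]
      have h3 := him h2
      rw [hts] at h3
      simp only [Complex.neg_im] at h3
      linarith

/-- Closed form of the reflection coefficient on the real line:
`a(λ) ≠ 0` and `b(λ)/a(λ) = i(w₀(λ) − λ + Re E)/Im E`
with `E = −ω₀/2 + i·A₀/2`. -/
theorem reflection_coefficient_closed_form
    (A₀ ω₀ : ℝ) (hA : 0 < A₀) (hω : 0 < ω₀) :
    let E : ℂ := -(ω₀ : ℂ) / 2 + Complex.I * (A₀ : ℂ) / 2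
    let κ : ℝ → ℂ := fun lam =>
      (((lam : ℂ) - (starRingEnd ℂ) E) / ((lam : ℂ) - E)) ^ ((1 : ℂ) / 4)
    let a : ℝ → ℂ := fun lam => (κ lam + (κ lam)⁻¹) / 2
    let b : ℝ → ℂ := fun lam => (κ lam - (κ lam)⁻¹) / 2
    let w₀ : ℝ → ℝ := fun lam => if -ω₀ / 2 ≤ lam
      then Real.sqrt ((lam + ω₀ / 2) ^ 2 + A₀ ^ 2 / 4)
      else -Real.sqrt ((lam + ω₀ / 2) ^ 2 + A₀ ^ 2 / 4)
    ∀ lam : ℝ,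
      a lam ≠ 0 ∧
      b lam / a lam
        = Complex.I * (((w₀ lam : ℝ) : ℂ) - (lam : ℂ) - (ω₀ : ℂ) / 2)
            / ((A₀ : ℂ) / 2) := by
  intro E κ a b w₀ lam
  -- real quantities (opaque)
  obtain ⟨x, hxdef⟩ : ∃ x : ℝ, x = lam + ω₀ / 2 := ⟨_, rfl⟩
  obtain ⟨y, hydef⟩ : ∃ y : ℝ, y = A₀ / 2 := ⟨_, rfl⟩
  have hy : 0 < y := by rw [hydef]; linarith
  obtain ⟨w, hwdef⟩ : ∃ w : ℝ, w = Real.sqrt (x ^ 2 + y ^ 2) := ⟨_, rfl⟩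
  have hwpos : 0 < w := hwdef ▸ Real.sqrt_pos.mpr (by positivity)
  have hw2 : w ^ 2 = x ^ 2 + y ^ 2 := by rw [hwdef]; exact Real.sq_sqrt (by positivity)
  have hw2C : (w : ℂ) ^ 2 = (x : ℂ) ^ 2 + (y : ℂ) ^ 2 := by exact_mod_cast congrArg Complex.ofReal hw2
  have hwne : (w : ℂ) ≠ 0 := by exact_mod_cast hwpos.ne'
  have hyne : (y : ℂ) ≠ 0 := by exact_mod_cast hy.ne'
  -- complex quantities
  obtain ⟨u, hudef⟩ : ∃ u : ℂ, u = (x : ℂ) + (y : ℂ) * Complex.I := ⟨_, rfl⟩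
  have hure : u.re = x := by simp [hudef]
  have huim : u.im = y := by simp [hudef]
  have hu0 : u ≠ 0 := fun h => by rw [h] at huim; simp at huim; exact hy.ne' huim.symm
  have hcu : (starRingEnd ℂ) u = (x : ℂ) - (y : ℂ) * Complex.I := by
    simp [hudef, Complex.conj_I]; ring
  have hcu0 : (starRingEnd ℂ) u ≠ 0 := by simpa using hu0
  have hmul : u * (starRingEnd ℂ) u = (w : ℂ) ^ 2 := by
    rw [hcu, hudef]
    linear_combination (-1 : ℂ) * hw2C + (-(y:ℂ)^2) * Complex.I_sq
  -- identify the base of the power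
  have h1 : (lam : ℂ) - (starRingEnd ℂ) E = u := by
    rw [hudef, hxdef, hydef]
    simp only [E, map_add, map_div₀, map_neg, map_mul, Complex.conj_ofReal,
      Complex.conj_I, map_ofNat]
    push_cast
    ring
  have h2 : (lam : ℂ) - E = (starRingEnd ℂ) u := by
    rw [hcu, hxdef, hydef]
    simp only [E]
    push_cast
    ring
  obtain ⟨z, hzdef⟩ : ∃ z : ℂ, z = u / (starRingEnd ℂ) u := ⟨_, rfl⟩
  have hz0 : z ≠ 0 := hzdef ▸ div_ne_zero hu0 hcu0
  have hκeq : κ lam = z ^ ((1:ℂ)/4) := by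
    simp only [κ, h1, h2, hzdef]
  have hκ0 : κ lam ≠ 0 := by
    rw [hκeq]
    simp [Complex.cpow_eq_zero_iff, hz0]
  have hκ2 : κ lam ^ 2 = z ^ ((1:ℂ)/2) := by
    rw [hκeq, sq, ← Complex.cpow_add _ _ hz0]; norm_num
  -- the candidate square root s
  obtain ⟨s, hsdef⟩ : ∃ s : ℂ, s = (if 0 ≤ x then u else -u) / (w : ℂ) := ⟨_, rfl⟩
  have hs2 : s ^ 2 = z := by
    have huu : u ^ 2 / ((w:ℂ))^2 = z := by
      rw [hzdef, div_eq_div_iff (pow_ne_zero 2 hwne) hcu0]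
      linear_combination u * hmul
    rw [hsdef, div_pow]
    split_ifs with hx
    · exact huu
    · rw [neg_sq]; exact huu
  have hsre : s.re = (if 0 ≤ x then x else -x) / w := by
    rw [hsdef]
    split_ifs with hx <;> simp [Complex.div_ofReal_re, hure]
  have hsim : s.im = (if 0 ≤ x then y else -y) / w := by
    rw [hsdef]
    split_ifs with hx <;> simp [Complex.div_ofReal_im, huim]
  have hscond : 0 < s.re ∨ (s.re = 0 ∧ 0 < s.im) := by
    rcases lt_trichotomy x 0 with hx | hx | hx
    · left
      rw [hsre, if_neg (not_le.mpr hx)]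
      exact div_pos (by linarith) hwpos
    · right
      constructor
      · rw [hsre, if_pos hx.ge, hx]; simp
      · rw [hsim, if_pos hx.ge]; exact div_pos hy hwpos
    · left
      rw [hsre, if_pos hx.le]
      exact div_pos hx hwpos
  have hts : z ^ ((1:ℂ)/2) = s := aux_cpow_half_eq z s hz0 hs2 hscond
  have hκ2s : κ lam ^ 2 = s := by rw [hκ2, hts]
  -- s + 1 ≠ 0
  have hs1 : s + 1 ≠ 0 := by
    intro h
    have hre : s.re = -1 := by
      have h' := congrArg Complex.re h
      simp only [Complex.add_re, Complex.one_re, Complex.zero_re] at h'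
      linarith
    rcases hscond with h' | ⟨h', _⟩ <;> rw [hre] at h' <;> linarith
  have h2κ : (2 : ℂ) * κ lam ≠ 0 := mul_ne_zero two_ne_zero hκ0
  -- rewrite a and b
  have ha' : a lam = (s + 1) / (2 * κ lam) := by
    show (κ lam + (κ lam)⁻¹) / 2 = _
    rw [← hκ2s, div_eq_div_iff (two_ne_zero) h2κ]
    field_simp
  have hb' : b lam = (s - 1) / (2 * κ lam) := by
    show (κ lam - (κ lam)⁻¹) / 2 = _
    rw [← hκ2s, div_eq_div_iff (two_ne_zero) h2κ]
    field_simp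
  have ha0 : a lam ≠ 0 := by
    rw [ha']
    exact div_ne_zero hs1 h2κ
  refine ⟨ha0, ?_⟩
  have hratio : b lam / a lam = (s - 1) / (s + 1) := by
    rw [ha', hb', div_eq_div_iff (div_ne_zero hs1 h2κ) hs1]
    ring
  rw [hratio]
  -- identify w₀ and the target
  have hw₀ : (w₀ lam : ℝ) = if 0 ≤ x then w else -w := by
    have hxequiv : (-ω₀ / 2 ≤ lam) ↔ (0 ≤ x) := by
      rw [hxdef]; constructor <;> intro <;> linarith
    have hAy : A₀ ^ 2 / 4 = y ^ 2 := by rw [hydef]; ring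
    show (if -ω₀ / 2 ≤ lam
      then Real.sqrt ((lam + ω₀ / 2) ^ 2 + A₀ ^ 2 / 4)
      else -Real.sqrt ((lam + ω₀ / 2) ^ 2 + A₀ ^ 2 / 4)) = _
    simp only [hxequiv, ← hxdef, hAy, ← hwdef]
  have htarget : Complex.I * (((w₀ lam : ℝ) : ℂ) - (lam : ℂ) - (ω₀ : ℂ) / 2) / ((A₀ : ℂ) / 2)
      = Complex.I * ((if 0 ≤ x then (w:ℂ) else -(w:ℂ)) - (x : ℂ)) / (y : ℂ) := by
    rw [hw₀, hydef, hxdef]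
    split_ifs <;> push_cast <;> ring
  rw [htarget]
  -- final algebraic identity
  rw [div_eq_div_iff hs1 hyne, hsdef, hudef]
  split_ifs with hx
  · field_simp
    linear_combination (-Complex.I) * hw2C + (((x:ℂ) - w) * y) * Complex.I_sq
  · field_simp
    linear_combination Complex.I * hw2C + (-(((x:ℂ) + w) * y)) * Complex.I_sq
end

section
/- Let A₀ > 0 and ω₀ > 0 be real and set E := −ω₀/2 + i·A₀/2. For λ ∈ ℝ define κ(λ) := ((λ − conj E)/(λ − E))^(1/4) using the principal branch of the complex power, a(λ) := (κ(λ) + κ(λ)⁻¹)/2 and b(λ) := (κ(λ) − κ(λ)⁻¹)/2. Then λ·b(λ) → i·A₀/4 and λ·(a(λ) − 1) → 0 as λ → +∞ and also as λ → −∞ (limits taken along the real line); consequently λ·(b(λ)/a(λ)) → i·A₀/4 as λ → ±∞. -/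
open Filter Topology

private noncomputable def fP (z : ℂ) : ℂ :=
  ((1 + z) ^ ((1:ℂ)/4) - (1 + z) ^ (-((1:ℂ)/4))) / 2

private noncomputable def gP (z : ℂ) : ℂ :=
  ((1 + z) ^ ((1:ℂ)/4) + (1 + z) ^ (-((1:ℂ)/4))) / 2 - 1

private lemma slit1 : (1:ℂ) + 0 ∈ Complex.slitPlane := by
  norm_num [Complex.mem_slitPlane_iff]

private lemma hd1 : HasDerivAt (fun z : ℂ => (1+z) ^ ((1:ℂ)/4)) (1/4) 0 := by
  have := HasDerivAt.cpow_const (c := (1:ℂ)/4) ((hasDerivAt_id (0:ℂ)).const_add 1) slit1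
  simpa using this

private lemma hd2 : HasDerivAt (fun z : ℂ => (1+z) ^ (-((1:ℂ)/4))) (-(1/4)) 0 := by
  have := HasDerivAt.cpow_const (c := -((1:ℂ)/4)) ((hasDerivAt_id (0:ℂ)).const_add 1) slit1
  simpa using this

private lemma hfP : HasDerivAt fP (1/4) 0 := by
  have h := (hd1.sub hd2).div_const 2
  norm_num at h
  exact h

private lemma hgP : HasDerivAt gP 0 0 := by
  have h := ((hd1.add hd2).div_const 2).sub_const 1
  norm_num at h
  exact h.sub_const 1

private lemma fP0 : fP 0 = 0 := by simp [fP]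

private lemma gP0 : gP 0 = 0 := by simp [gP]

private lemma auxTend (E c : ℂ) (hc0 : c ≠ 0)
    (hden : ∀ lam : ℝ, ((lam : ℂ) - E) ≠ 0)
    (κ : ℝ → ℂ)
    (hκ : ∀ lam : ℝ, κ lam = (1 + c / ((lam : ℂ) - E)) ^ ((1:ℂ)/4))
    (l : Filter ℝ) (hl : Tendsto (fun x : ℝ => |x|) l atTop) :
    Tendsto (fun lam : ℝ => (lam : ℂ) * ((κ lam - (κ lam)⁻¹)/2)) l (𝓝 (c/4)) ∧
    Tendsto (fun lam : ℝ => (lam : ℂ) * ((κ lam + (κ lam)⁻¹)/2 - 1)) l (𝓝 0) ∧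
    Tendsto (fun lam : ℝ => (lam : ℂ) *
      ((κ lam - (κ lam)⁻¹)/2 / ((κ lam + (κ lam)⁻¹)/2))) l (𝓝 (c/4)) := by
  have hw_ne : ∀ lam : ℝ, c / ((lam : ℂ) - E) ≠ 0 :=
    fun lam => div_ne_zero hc0 (hden lam)
  have hb : ∀ lam : ℝ, (κ lam - (κ lam)⁻¹)/2 = fP (c / ((lam : ℂ) - E)) := by
    intro lam
    rw [hκ lam, fP, ← Complex.cpow_neg]
  have ha : ∀ lam : ℝ, (κ lam + (κ lam)⁻¹)/2 = gP (c / ((lam : ℂ) - E)) + 1 := by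
    intro lam
    rw [hκ lam, gP, ← Complex.cpow_neg]
    ring
  have hnorm : Tendsto (fun lam : ℝ => ‖(lam : ℂ) - E‖) l atTop := by
    apply tendsto_atTop_mono (fun lam : ℝ => ?_)
      (tendsto_atTop_add_const_right l (-‖E‖) hl)
    calc |lam| + -‖E‖ = ‖(lam : ℂ)‖ - ‖E‖ := by
          rw [Complex.norm_real, Real.norm_eq_abs]; ring
      _ ≤ ‖(lam : ℂ) - E‖ := norm_sub_norm_le _ _
  have hzero : ∀ d : ℂ, Tendsto (fun lam : ℝ => d / ((lam : ℂ) - E)) l (𝓝 0) := by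
    intro d
    rw [tendsto_zero_iff_norm_tendsto_zero]
    simpa [norm_div] using (tendsto_const_nhds (x := ‖d‖) (f := l)).div_atTop hnorm
  have hw0 : Tendsto (fun lam : ℝ => c / ((lam : ℂ) - E)) l (𝓝 0) := hzero c
  have hw0' : Tendsto (fun lam : ℝ => c / ((lam : ℂ) - E)) l (𝓝[≠] (0:ℂ)) :=
    tendsto_nhdsWithin_of_tendsto_nhds_of_eventually_within _ hw0
      (Eventually.of_forall fun lam => hw_ne lam)
  have hlw : Tendsto (fun lam : ℝ => (lam : ℂ) * (c / ((lam : ℂ) - E))) l (𝓝 c) := by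
    have h := (tendsto_const_nhds (x := c) (f := l)).add
      ((tendsto_const_nhds (x := c) (f := l)).mul (hzero E))
    simp only [mul_zero, add_zero] at h
    apply h.congr
    intro lam
    have hne := hden lam
    field_simp
    ring
  have hfs : Tendsto (fun lam : ℝ => fP (c / ((lam : ℂ) - E)) / (c / ((lam : ℂ) - E)))
      l (𝓝 (1/4)) := by
    have h := (hasDerivAt_iff_tendsto_slope.mp hfP).comp hw0'
    apply h.congr
    intro lam
    simp [Function.comp, slope_def_field, fP0]
  have hgs : Tendsto (fun lam : ℝ => gP (c / ((lam : ℂ) - E)) / (c / ((lam : ℂ) - E)))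
      l (𝓝 0) := by
    have h := (hasDerivAt_iff_tendsto_slope.mp hgP).comp hw0'
    apply h.congr
    intro lam
    simp [Function.comp, slope_def_field, gP0]
  have heq : ∀ (F : ℂ → ℂ) (lam : ℝ),
      (lam : ℂ) * (c / ((lam : ℂ) - E)) *
        (F (c / ((lam : ℂ) - E)) / (c / ((lam : ℂ) - E))) =
      (lam : ℂ) * F (c / ((lam : ℂ) - E)) := by
    intro F lam
    rw [mul_assoc, mul_comm (c / ((lam : ℂ) - E)), div_mul_cancel₀ _ (hw_ne lam)]
  have hTb : Tendsto (fun lam : ℝ => (lam : ℂ) * ((κ lam - (κ lam)⁻¹)/2)) l (𝓝 (c/4)) := by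
    have h := (hlw.mul hfs).congr (heq fP)
    have hval : c * (1/4) = c / 4 := by ring
    rw [hval] at h
    exact h.congr fun lam => by rw [hb lam]
  have hTa : Tendsto (fun lam : ℝ => (lam : ℂ) * ((κ lam + (κ lam)⁻¹)/2 - 1)) l (𝓝 0) := by
    have h := (hlw.mul hgs).congr (heq gP)
    rw [mul_zero] at h
    exact h.congr fun lam => by rw [ha lam]; ring_nf
  have hA1 : Tendsto (fun lam : ℝ => (κ lam + (κ lam)⁻¹)/2) l (𝓝 1) := by
    have h := (hgP.continuousAt.tendsto.comp hw0).add (tendsto_const_nhds (x := (1:ℂ)))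
    rw [gP0, zero_add] at h
    exact h.congr fun lam => (ha lam).symm
  refine ⟨hTb, hTa, ?_⟩
  have h := hTb.div hA1 one_ne_zero
  rw [div_one] at h
  exact h.congr fun lam => by
    simp only [Pi.div_apply]
    rw [mul_div_assoc]

/-- Asymptotics of the spectral functions along the real line:
`λ·b(λ) → i·A₀/4`, `λ·(a(λ) − 1) → 0` and `λ·(b/a)(λ) → i·A₀/4`
as `λ → ±∞`. -/
theorem spectral_function_asymptotics
    (A₀ ω₀ : ℝ) (hA : 0 < A₀) (hω : 0 < ω₀) :
    let E : ℂ := -(ω₀ : ℂ) / 2 + Complex.I * (A₀ : ℂ) / 2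
    let κ : ℝ → ℂ := fun lam =>
      (((lam : ℂ) - (starRingEnd ℂ) E) / ((lam : ℂ) - E)) ^ ((1 : ℂ) / 4)
    let a : ℝ → ℂ := fun lam => (κ lam + (κ lam)⁻¹) / 2
    let b : ℝ → ℂ := fun lam => (κ lam - (κ lam)⁻¹) / 2
    (Tendsto (fun lam : ℝ => (lam : ℂ) * b lam) atTop
        (nhds (Complex.I * (A₀ : ℂ) / 4)) ∧
      Tendsto (fun lam : ℝ => (lam : ℂ) * b lam) atBot
        (nhds (Complex.I * (A₀ : ℂ) / 4))) ∧
    (Tendsto (fun lam : ℝ => (lam : ℂ) * (a lam - 1)) atTop (nhds 0) ∧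
      Tendsto (fun lam : ℝ => (lam : ℂ) * (a lam - 1)) atBot (nhds 0)) ∧
    (Tendsto (fun lam : ℝ => (lam : ℂ) * (b lam / a lam)) atTop
        (nhds (Complex.I * (A₀ : ℂ) / 4)) ∧
      Tendsto (fun lam : ℝ => (lam : ℂ) * (b lam / a lam)) atBot
        (nhds (Complex.I * (A₀ : ℂ) / 4))) := by
  intro E κ a b
  have hE : E = -(ω₀ : ℂ) / 2 + Complex.I * (A₀ : ℂ) / 2 := rfl
  have hc0 : Complex.I * (A₀ : ℂ) ≠ 0 :=
    mul_ne_zero Complex.I_ne_zero (Complex.ofReal_ne_zero.mpr hA.ne')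
  have hcE : (starRingEnd ℂ) E = E - Complex.I * (A₀ : ℂ) := by
    rw [hE]
    simp [map_add, map_div₀, map_neg, map_ofNat, Complex.conj_I, Complex.conj_ofReal]
    ring
  have hden : ∀ lam : ℝ, ((lam : ℂ) - E) ≠ 0 := by
    intro lam h
    have him := congrArg Complex.im h
    rw [hE] at him
    simp at him
    linarith
  have hκ : ∀ lam : ℝ, κ lam =
      (1 + Complex.I * (A₀ : ℂ) / ((lam : ℂ) - E)) ^ ((1:ℂ)/4) := by
    intro lam
    show (((lam : ℂ) - (starRingEnd ℂ) E) / ((lam : ℂ) - E)) ^ ((1 : ℂ) / 4) = _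
    rw [hcE]
    congr 1
    field_simp [hden lam]
    ring
  have key := auxTend E (Complex.I * (A₀ : ℂ)) hc0 hden κ hκ
  obtain ⟨b1, a1, r1⟩ := key atTop tendsto_abs_atTop_atTop
  obtain ⟨b2, a2, r2⟩ := key atBot tendsto_abs_atBot_atTop
  exact ⟨⟨b1, b2⟩, ⟨a1, a2⟩, ⟨r1, r2⟩⟩
end

section
/- Let A₀ > 0 and ω₀ > 0 be real and set E := −ω₀/2 + i·A₀/2 and v := A₀/2. For z ∈ ℂ with z ≠ E define u(z) := (z − conj E)/(z − E) and r(z) := (√(u(z)) − 1)/(√(u(z)) + 1), where √ denotes the principal branch of the complex square root (note √(u(z)) + 1 ≠ 0 whenever u(z) ≠ 0). Then for every ν ∈ ℝ with −v < ν < v, the limit as ε → 0⁺ of r(−ω₀/2 − ε + iν) − r(−ω₀/2 + ε + iν) exists and equals −2i·√(v² − ν²)/v. -/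
open Filter

lemma sqrt_tendsto_neg {α : Type*} {f : α → ℂ} {l : Filter α} {t : ℝ} (ht : 0 < t)
    (hf : Tendsto f l (nhds (-(t : ℂ)))) (him : ∀ᶠ x in l, (f x).im < 0) :
    Tendsto (fun x => f x ^ ((1 : ℂ)/2)) l (nhds (-(Real.sqrt t : ℂ) * Complex.I)) := by
  have h0 : ∀ᶠ x in l, f x ≠ 0 := him.mono (fun x hx h => by simp [h] at hx)
  have h1 : Tendsto f l (nhdsWithin (-(t : ℂ)) {z : ℂ | z.im < 0}) :=
    tendsto_nhdsWithin_iff.mpr ⟨hf, him⟩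
  have h2 := Complex.tendsto_log_nhdsWithin_im_neg_of_re_neg_of_im_zero
    (z := -(t : ℂ)) (by simpa using ht) (by simp)
  have habs : ‖(-(t : ℂ))‖ = t := by
    simp [abs_of_pos ht]
  rw [habs] at h2
  have hlog : Tendsto (fun x => Complex.log (f x)) l
      (nhds ((Real.log t : ℂ) - Real.pi * Complex.I)) := h2.comp h1
  have hexp : Tendsto (fun x => Complex.exp (Complex.log (f x) * ((1 : ℂ)/2))) l
      (nhds (Complex.exp (((Real.log t : ℂ) - Real.pi * Complex.I) * ((1 : ℂ)/2)))) :=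
    (Complex.continuous_exp.tendsto _).comp (hlog.mul_const _)
  have heq : Complex.exp (((Real.log t : ℂ) - Real.pi * Complex.I) * ((1 : ℂ)/2))
      = -(Real.sqrt t : ℂ) * Complex.I := by
    rw [show ((Real.log t : ℂ) - Real.pi * Complex.I) * ((1 : ℂ)/2)
        = ((Real.log t / 2 : ℝ) : ℂ) + ((-(Real.pi/2) : ℝ) : ℂ) * Complex.I by push_cast; ring]
    rw [Complex.exp_add, Complex.exp_mul_I, ← Complex.ofReal_exp,
      show Real.exp (Real.log t / 2) = Real.sqrt t by
        rw [Real.sqrt_eq_rpow, Real.rpow_def_of_pos ht]; ring_nf,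
      ← Complex.ofReal_cos, ← Complex.ofReal_sin]
    simp [Real.cos_pi_div_two, Real.sin_pi_div_two]
  rw [heq] at hexp
  apply hexp.congr'
  filter_upwards [h0] with x hx
  rw [Complex.cpow_def_of_ne_zero hx]

lemma sqrt_tendsto_pos {α : Type*} {f : α → ℂ} {l : Filter α} {t : ℝ} (ht : 0 < t)
    (hf : Tendsto f l (nhds (-(t : ℂ)))) (him : ∀ᶠ x in l, 0 < (f x).im) :
    Tendsto (fun x => f x ^ ((1 : ℂ)/2)) l (nhds ((Real.sqrt t : ℂ) * Complex.I)) := by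
  have h0 : ∀ᶠ x in l, f x ≠ 0 := him.mono (fun x hx h => by simp [h] at hx)
  have h1 : Tendsto f l (nhdsWithin (-(t : ℂ)) {z : ℂ | 0 ≤ z.im}) :=
    tendsto_nhdsWithin_iff.mpr ⟨hf, him.mono fun x hx => le_of_lt hx⟩
  have h2 := Complex.tendsto_log_nhdsWithin_im_nonneg_of_re_neg_of_im_zero
    (z := -(t : ℂ)) (by simpa using ht) (by simp)
  have habs : ‖(-(t : ℂ))‖ = t := by
    simp [abs_of_pos ht]
  rw [habs] at h2
  have hlog : Tendsto (fun x => Complex.log (f x)) l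
      (nhds ((Real.log t : ℂ) + Real.pi * Complex.I)) := h2.comp h1
  have hexp : Tendsto (fun x => Complex.exp (Complex.log (f x) * ((1 : ℂ)/2))) l
      (nhds (Complex.exp (((Real.log t : ℂ) + Real.pi * Complex.I) * ((1 : ℂ)/2)))) :=
    (Complex.continuous_exp.tendsto _).comp (hlog.mul_const _)
  have heq : Complex.exp (((Real.log t : ℂ) + Real.pi * Complex.I) * ((1 : ℂ)/2))
      = (Real.sqrt t : ℂ) * Complex.I := by
    rw [show ((Real.log t : ℂ) + Real.pi * Complex.I) * ((1 : ℂ)/2)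
        = ((Real.log t / 2 : ℝ) : ℂ) + ((Real.pi/2 : ℝ) : ℂ) * Complex.I by push_cast; ring]
    rw [Complex.exp_add, Complex.exp_mul_I, ← Complex.ofReal_exp,
      show Real.exp (Real.log t / 2) = Real.sqrt t by
        rw [Real.sqrt_eq_rpow, Real.rpow_def_of_pos ht]; ring_nf,
      ← Complex.ofReal_cos, ← Complex.ofReal_sin]
    simp [Real.cos_pi_div_two, Real.sin_pi_div_two]
  rw [heq] at hexp
  apply hexp.congr'
  filter_upwards [h0] with x hx
  rw [Complex.cpow_def_of_ne_zero hx]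

/-- Jump of the reflection coefficient across the open segment `(E, conj E)`:
for `z = Re E + iν` with `−Im E < ν < Im E`,
`r₋(z) − r₊(z) = −2i√(Im²E − ν²)/Im E`. -/
theorem reflection_coefficient_jump
    (A₀ ω₀ : ℝ) (hA : 0 < A₀) (hω : 0 < ω₀) :
    let E : ℂ := -(ω₀ : ℂ) / 2 + Complex.I * (A₀ : ℂ) / 2
    let v : ℝ := A₀ / 2
    let u : ℂ → ℂ := fun z => (z - (starRingEnd ℂ) E) / (z - E)
    let r : ℂ → ℂ := fun z =>
      ((u z) ^ ((1 : ℂ) / 2) - 1) / ((u z) ^ ((1 : ℂ) / 2) + 1)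
    ∀ ν : ℝ, -v < ν → ν < v →
      Tendsto
        (fun ε : ℝ =>
          r ((-ω₀ / 2 - ε : ℝ) + Complex.I * (ν : ℂ)) -
            r ((-ω₀ / 2 + ε : ℝ) + Complex.I * (ν : ℂ)))
        (nhdsWithin 0 (Set.Ioi 0))
        (nhds (-2 * Complex.I * ((Real.sqrt (v ^ 2 - ν ^ 2) : ℝ) : ℂ) / (v : ℂ))) := by
  intro E v u r ν hν1 hν2
  have hv : 0 < v := by simp only [v]; linarith
  have hb : 0 < v - ν := by linarith
  have ha : 0 < v + ν := by linarith
  set t : ℝ := (v + ν) / (v - ν) with htdef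
  have ht : 0 < t := div_pos ha hb
  set s : ℝ := Real.sqrt t with hsdef
  have hs0 : 0 ≤ s := Real.sqrt_nonneg _
  have hs2 : s ^ 2 = t := Real.sq_sqrt ht.le
  -- conjugate of E
  have hE : (starRingEnd ℂ) E = -(ω₀ : ℂ)/2 - Complex.I * (A₀ : ℂ)/2 := by
    simp only [E, map_add, map_div₀, map_neg, map_ofNat, Complex.conj_I, map_mul,
      Complex.conj_ofReal]
    ring
  -- u along the two paths
  have hu_left : ∀ ε : ℝ, u (((-ω₀ / 2 - ε : ℝ) : ℂ) + Complex.I * ν)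
      = (((-ε : ℝ) : ℂ) + Complex.I * ((ν + v : ℝ) : ℂ)) /
        (((-ε : ℝ) : ℂ) + Complex.I * ((ν - v : ℝ) : ℂ)) := by
    intro ε
    simp only [u, hE, E, v]
    congr 1 <;> push_cast <;> ring
  have hu_right : ∀ ε : ℝ, u (((-ω₀ / 2 + ε : ℝ) : ℂ) + Complex.I * ν)
      = (((ε : ℝ) : ℂ) + Complex.I * ((ν + v : ℝ) : ℂ)) /
        (((ε : ℝ) : ℂ) + Complex.I * ((ν - v : ℝ) : ℂ)) := by
    intro ε
    simp only [u, hE, E, v]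
    congr 1 <;> push_cast <;> ring
  -- limit of u
  have hbase : Tendsto (fun ε : ℝ => ((ε : ℝ) : ℂ)) (nhdsWithin 0 (Set.Ioi 0)) (nhds 0) := by
    simpa using (Complex.continuous_ofReal.tendsto 0).mono_left nhdsWithin_le_nhds
  have hbase' : Tendsto (fun ε : ℝ => ((-ε : ℝ) : ℂ)) (nhdsWithin 0 (Set.Ioi 0)) (nhds 0) := by
    simpa using hbase.neg
  have hden_ne : (0 : ℂ) + Complex.I * ((ν - v : ℝ) : ℂ) ≠ 0 := by
    rw [zero_add]
    exact mul_ne_zero Complex.I_ne_zero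
      (Complex.ofReal_ne_zero.mpr (sub_ne_zero.mpr (ne_of_lt hν2)))
  have hval : ((0 : ℂ) + Complex.I * ((ν + v : ℝ) : ℂ)) /
      ((0 : ℂ) + Complex.I * ((ν - v : ℝ) : ℂ)) = -(t : ℂ) := by
    rw [zero_add, zero_add, mul_div_mul_left _ _ Complex.I_ne_zero]
    have hr : (ν + v) / (ν - v) = -t := by
      rw [htdef, show ν - v = -(v - ν) by ring, div_neg, show ν + v = v + ν by ring]
    rw [← Complex.ofReal_div, hr, Complex.ofReal_neg]
  have hu_tend_left : Tendsto
      (fun ε : ℝ => (((-ε : ℝ) : ℂ) + Complex.I * ((ν + v : ℝ) : ℂ)) /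
        (((-ε : ℝ) : ℂ) + Complex.I * ((ν - v : ℝ) : ℂ)))
      (nhdsWithin 0 (Set.Ioi 0)) (nhds (-(t : ℂ))) := by
    rw [← hval]
    exact (hbase'.add tendsto_const_nhds).div (hbase'.add tendsto_const_nhds) hden_ne
  have hu_tend_right : Tendsto
      (fun ε : ℝ => (((ε : ℝ) : ℂ) + Complex.I * ((ν + v : ℝ) : ℂ)) /
        (((ε : ℝ) : ℂ) + Complex.I * ((ν - v : ℝ) : ℂ)))
      (nhdsWithin 0 (Set.Ioi 0)) (nhds (-(t : ℂ))) := by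
    rw [← hval]
    exact (hbase.add tendsto_const_nhds).div (hbase.add tendsto_const_nhds) hden_ne
  -- imaginary parts
  have hdenne : ∀ x : ℝ, ((x : ℂ) + Complex.I * ((ν - v : ℝ) : ℂ)) ≠ 0 := by
    intro x h
    have : ((x : ℂ) + Complex.I * ((ν - v : ℝ) : ℂ)).im = 0 := by rw [h]; simp
    simp at this
    linarith
  have him_left : ∀ᶠ ε in nhdsWithin (0:ℝ) (Set.Ioi 0),
      ((((-ε : ℝ) : ℂ) + Complex.I * ((ν + v : ℝ) : ℂ)) /
        (((-ε : ℝ) : ℂ) + Complex.I * ((ν - v : ℝ) : ℂ))).im < 0 := by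
    filter_upwards [self_mem_nhdsWithin] with ε hε
    rw [Complex.div_im, div_sub_div_same]
    have hns : 0 < Complex.normSq (((-ε : ℝ) : ℂ) + Complex.I * ((ν - v : ℝ) : ℂ)) :=
      Complex.normSq_pos.mpr (hdenne _)
    apply div_neg_of_neg_of_pos _ hns
    have hε' : (0:ℝ) < ε := hε
    simp only [Complex.add_im, Complex.add_re, Complex.ofReal_re, Complex.ofReal_im,
      Complex.mul_im, Complex.mul_re, Complex.I_re, Complex.I_im]
    nlinarith
  have him_right : ∀ᶠ ε in nhdsWithin (0:ℝ) (Set.Ioi 0),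
      0 < ((((ε : ℝ) : ℂ) + Complex.I * ((ν + v : ℝ) : ℂ)) /
        (((ε : ℝ) : ℂ) + Complex.I * ((ν - v : ℝ) : ℂ))).im := by
    filter_upwards [self_mem_nhdsWithin] with ε hε
    rw [Complex.div_im, div_sub_div_same]
    have hns : 0 < Complex.normSq (((ε : ℝ) : ℂ) + Complex.I * ((ν - v : ℝ) : ℂ)) :=
      Complex.normSq_pos.mpr (hdenne _)
    apply div_pos _ hns
    have hε' : (0:ℝ) < ε := hε
    simp only [Complex.add_im, Complex.add_re, Complex.ofReal_re, Complex.ofReal_im,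
      Complex.mul_im, Complex.mul_re, Complex.I_re, Complex.I_im]
    nlinarith
  -- square-root limits
  have hw_left : Tendsto (fun ε : ℝ => (u (((-ω₀ / 2 - ε : ℝ) : ℂ) + Complex.I * ν)) ^ ((1:ℂ)/2))
      (nhdsWithin 0 (Set.Ioi 0)) (nhds (-(s : ℂ) * Complex.I)) := by
    have := sqrt_tendsto_neg ht hu_tend_left him_left
    rw [hsdef]
    apply this.congr
    intro ε
    rw [hu_left]
  have hw_right : Tendsto (fun ε : ℝ => (u (((-ω₀ / 2 + ε : ℝ) : ℂ) + Complex.I * ν)) ^ ((1:ℂ)/2))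
      (nhdsWithin 0 (Set.Ioi 0)) (nhds ((s : ℂ) * Complex.I)) := by
    have := sqrt_tendsto_pos ht hu_tend_right him_right
    rw [hsdef]
    apply this.congr
    intro ε
    rw [hu_right]
  -- r limits
  have hd1 : (-(s : ℂ) * Complex.I + 1) ≠ 0 := by
    intro h
    have : (-(s : ℂ) * Complex.I + 1).re = 0 := by rw [h]; simp
    simp at this
  have hd2 : ((s : ℂ) * Complex.I + 1) ≠ 0 := by
    intro h
    have : ((s : ℂ) * Complex.I + 1).re = 0 := by rw [h]; simp
    simp at this
  have hr_left : Tendsto (fun ε : ℝ => r (((-ω₀ / 2 - ε : ℝ) : ℂ) + Complex.I * ν))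
      (nhdsWithin 0 (Set.Ioi 0))
      (nhds ((-(s : ℂ) * Complex.I - 1) / (-(s : ℂ) * Complex.I + 1))) := by
    simp only [r]
    exact (hw_left.sub_const 1).div (hw_left.add_const 1) hd1
  have hr_right : Tendsto (fun ε : ℝ => r (((-ω₀ / 2 + ε : ℝ) : ℂ) + Complex.I * ν))
      (nhdsWithin 0 (Set.Ioi 0))
      (nhds (((s : ℂ) * Complex.I - 1) / ((s : ℂ) * Complex.I + 1))) := by
    simp only [r]
    exact (hw_right.sub_const 1).div (hw_right.add_const 1) hd2
  have hfinal := hr_left.sub hr_right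
  -- identify the limit value
  have hsc : Real.sqrt (v ^ 2 - ν ^ 2) = s * (v - ν) := by
    rw [hsdef, htdef, show v ^ 2 - ν ^ 2 = (v + ν) / (v - ν) * (v - ν) ^ 2 by
      field_simp; ring, Real.sqrt_mul (le_of_lt ht), Real.sqrt_sq hb.le]
  have hvC : ((v : ℂ)) ≠ 0 := Complex.ofReal_ne_zero.mpr (ne_of_gt hv)
  have hkey : ((s : ℂ)) ^ 2 * ((v : ℂ) - ν) = (v : ℂ) + ν := by
    have : s ^ 2 * (v - ν) = v + ν := by
      rw [hs2, htdef]; field_simp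
    exact_mod_cast this
  have hvalue : (-(s : ℂ) * Complex.I - 1) / (-(s : ℂ) * Complex.I + 1) -
      ((s : ℂ) * Complex.I - 1) / ((s : ℂ) * Complex.I + 1)
      = -2 * Complex.I * ((Real.sqrt (v ^ 2 - ν ^ 2) : ℝ) : ℂ) / (v : ℂ) := by
    rw [hsc]
    push_cast
    rw [div_sub_div _ _ hd1 hd2, div_eq_div_iff (mul_ne_zero hd1 hd2) hvC]
    linear_combination (2 * Complex.I * (s:ℂ)) * hkey + (-2 * (s:ℂ)^3 * ((v:ℂ) - (ν:ℂ)) * Complex.I) * Complex.I_sq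
  rw [← hvalue]
  exact hfinal
end

section
/- Let Λ > 0 and let n : ℝ → ℝ be a function vanishing outside the interval [−Λ, Λ] and satisfying a Hölder condition on ℝ: there exist C > 0 and μ ∈ (0, 1] such that |n(x) − n(y)| ≤ C·|x − y|^μ for all x, y ∈ ℝ. Then there exists a continuous function G : {z ∈ ℂ : Im z ≥ 0} → ℂ such that G(z) = ∫_{−Λ}^{Λ} n(s)/(s − z) ds for every z with Im z > 0. -/
open MeasureTheory Set Filter Topology Real

namespace PlemeljAux

lemma norm_log_le (w : ℂ) : ‖Complex.log w‖ ≤ |Real.log ‖w‖| + Real.pi := by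
  have : Complex.log w = (Real.log ‖w‖ : ℂ) + w.arg * Complex.I := rfl
  rw [this]
  refine (norm_add_le _ _).trans ?_
  rw [norm_mul, Complex.norm_real, Complex.norm_I, mul_one, Complex.norm_real]
  exact add_le_add le_rfl (Complex.abs_arg_le_pi w)

lemma abs_rpow_intervalIntegrable {e : ℝ} (he : -1 < e) (x a b : ℝ) :
    IntervalIntegrable (fun s => |s - x| ^ e) volume a b := by
  have key : ∀ t : ℝ, IntervalIntegrable (fun s => |s - x| ^ e) volume x t := by
    intro t
    rcases le_total x t with h | h
    · have h1 : IntervalIntegrable (fun s => (s - x) ^ e) volume x t := by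
        have := (intervalIntegral.intervalIntegrable_rpow' he (a := 0) (b := t - x)).comp_sub_right x
        simpa using this
      rw [intervalIntegrable_iff] at h1 ⊢
      refine h1.congr_fun ?_ measurableSet_uIoc
      intro s hs
      rw [Set.uIoc_of_le h] at hs
      show (s - x) ^ e = |s - x| ^ e
      rw [abs_of_nonneg (by linarith [hs.1] : (0:ℝ) ≤ s - x)]
    · have h1 : IntervalIntegrable (fun s => (x - s) ^ e) volume x t := by
        have := (intervalIntegral.intervalIntegrable_rpow' he (a := 0) (b := x - t)).comp_sub_left x
        simpa using this
      rw [intervalIntegrable_iff] at h1 ⊢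
      refine h1.congr_fun ?_ measurableSet_uIoc
      intro s hs
      rw [Set.uIoc_of_ge h] at hs
      show (x - s) ^ e = |s - x| ^ e
      rw [abs_of_nonpos (by linarith [hs.2] : s - x ≤ 0), neg_sub]
  exact (key a).symm.trans (key b)

lemma abs_rpow_integrableOn {e : ℝ} (he : -1 < e) (x a b : ℝ) :
    IntegrableOn (fun s => |s - x| ^ e) (Icc a b) := by
  rcases le_or_gt a b with h | h
  · rw [integrableOn_Icc_iff_integrableOn_Ioc]
    have := (abs_rpow_intervalIntegrable he x a b)
    rwa [intervalIntegrable_iff, Set.uIoc_of_le h] at this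
  · rw [Set.Icc_eq_empty (not_le.mpr h)]
    exact integrableOn_empty


lemma integral_abs_rpow {μ : ℝ} (hμ : 0 < μ) (x r : ℝ) (hr : 0 ≤ r) :
    ∫ s in Icc (x - r) (x + r), |s - x| ^ (μ - 1) = 2 * (r ^ μ / μ) := by
  have he : (-1 : ℝ) < μ - 1 := by linarith
  rw [MeasureTheory.integral_Icc_eq_integral_Ioc,
    ← intervalIntegral.integral_of_le (by linarith : x - r ≤ x + r)]
  have h1 : (∫ s in (x - r)..(x + r), |s - x| ^ (μ - 1)) =
      ∫ t in (-r)..r, |t| ^ (μ - 1) := by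
    have := intervalIntegral.integral_comp_sub_right (fun t => |t| ^ (μ - 1)) x
      (a := x - r) (b := x + r)
    simpa using this
  rw [h1]
  have hint : ∀ a b : ℝ, IntervalIntegrable (fun t : ℝ => |t| ^ (μ - 1)) volume a b := by
    intro a b
    simpa using abs_rpow_intervalIntegrable he 0 a b
  have hsplit := intervalIntegral.integral_add_adjacent_intervals (a := -r) (b := 0) (c := r)
    (hint _ _) (hint _ _)
  rw [← hsplit]
  have hneg : (∫ t in (-r)..(0:ℝ), |t| ^ (μ - 1)) = ∫ t in (0:ℝ)..r, |t| ^ (μ - 1) := by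
    have := intervalIntegral.integral_comp_neg (fun t : ℝ => |t| ^ (μ - 1)) (a := 0) (b := r)
    simpa using this.symm
  have hpos : (∫ t in (0:ℝ)..r, |t| ^ (μ - 1)) = r ^ μ / μ := by
    have hcong : (∫ t in (0:ℝ)..r, |t| ^ (μ - 1)) = ∫ t in (0:ℝ)..r, t ^ (μ - 1) := by
      refine intervalIntegral.integral_congr (fun t ht => ?_)
      rw [Set.uIcc_of_le hr] at ht
      rw [abs_of_nonneg ht.1]
    rw [hcong, integral_rpow (Or.inl he)]
    rw [Real.zero_rpow (by linarith : μ - 1 + 1 ≠ 0)]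
    simp [sub_add_cancel]
  rw [hneg, hpos]
  ring


variable {C μ : ℝ} {n : ℝ → ℝ}

lemma bound1 (hC : 0 < C) (hμ0 : 0 < μ)
    (hH : ∀ x y : ℝ, |n x - n y| ≤ C * |x - y| ^ μ) (z : ℂ) (s : ℝ) :
    ‖((n s : ℂ) - (n z.re : ℂ)) / ((s : ℂ) - z)‖ ≤ C * |s - z.re| ^ (μ - 1) := by
  rcases eq_or_ne s z.re with h | h
  · rw [h]
    simp only [sub_self, zero_div, norm_zero]
    positivity
  · have h0 : 0 < |s - z.re| := abs_pos.2 (sub_ne_zero.2 h)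
    have hnum : ‖((n s : ℂ) - (n z.re : ℂ))‖ ≤ C * |s - z.re| ^ μ := by
      rw [← Complex.ofReal_sub, Complex.norm_real]
      exact hH s z.re
    have hden : |s - z.re| ≤ ‖(s : ℂ) - z‖ := by
      calc |s - z.re| = |((s : ℂ) - z).re| := by simp
        _ ≤ ‖(s : ℂ) - z‖ := Complex.abs_re_le_norm _
    rw [norm_div]
    calc ‖(n s : ℂ) - (n z.re : ℂ)‖ / ‖(s : ℂ) - z‖ ≤ (C * |s - z.re| ^ μ) / |s - z.re| :=
          div_le_div₀ (by positivity) hnum h0 hden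
      _ = C * |s - z.re| ^ (μ - 1) := by
          rw [Real.rpow_sub h0, Real.rpow_one]
          ring

lemma n_continuous (hC : 0 < C) (hμ0 : 0 < μ)
    (hH : ∀ x y : ℝ, |n x - n y| ≤ C * |x - y| ^ μ) : Continuous n := by
  rw [continuous_iff_continuousAt]
  intro x₀
  have hb : ∀ x, ‖n x - n x₀‖ ≤ C * |x - x₀| ^ μ := fun x => by simpa using hH x x₀
  have h2 : Tendsto (fun x : ℝ => |x - x₀|) (𝓝 x₀) (𝓝 0) := by
    have h : Continuous fun x : ℝ => |x - x₀| := (continuous_id.sub continuous_const).abs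
    simpa using h.tendsto x₀
  have h3 : Tendsto (fun x : ℝ => |x - x₀| ^ μ) (𝓝 x₀) (𝓝 0) := by
    have h4 := (Real.continuousAt_rpow_const 0 μ (Or.inr hμ0.le)).tendsto
    rw [Real.zero_rpow hμ0.ne'] at h4
    exact h4.comp h2
  have ht := h3.const_mul C
  rw [mul_zero] at ht
  exact tendsto_sub_nhds_zero_iff.mp (squeeze_zero_norm hb ht)

lemma g_integrableOn (hC : 0 < C) (hμ0 : 0 < μ) (hμ1 : μ ≤ 1)
    (hH : ∀ x y : ℝ, |n x - n y| ≤ C * |x - y| ^ μ) (hn : Continuous n) (z : ℂ) (a b : ℝ) :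
    IntegrableOn (fun s : ℝ => ((n s : ℂ) - (n z.re : ℂ)) / ((s : ℂ) - z)) (Icc a b) := by
  have hmeas : Measurable fun s : ℝ => ((n s : ℂ) - (n z.re : ℂ)) / ((s : ℂ) - z) :=
    ((Complex.measurable_ofReal.comp hn.measurable).sub measurable_const).div
      (Complex.measurable_ofReal.sub measurable_const)
  refine Integrable.mono' ((abs_rpow_integrableOn (e := μ - 1) (by linarith) z.re a b).const_mul C)
    hmeas.aestronglyMeasurable ?_
  exact Filter.Eventually.of_forall fun s => bound1 hC hμ0 hH z s


lemma n_edge_zero (hC : 0 < C) (hμ0 : 0 < μ)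
    (hH : ∀ x y : ℝ, |n x - n y| ≤ C * |x - y| ^ μ)
    {c : ℝ} (hc : ∀ t : ℝ, 0 < t → n (c + t) = 0) : n c = 0 := by
  have hb : ∀ᶠ t : ℝ in 𝓝[>] (0:ℝ), |n c| ≤ C * t ^ μ := by
    filter_upwards [self_mem_nhdsWithin] with t ht
    have ht' : (0:ℝ) < t := ht
    calc |n c| = |n c - n (c + t)| := by rw [hc t ht', sub_zero]
      _ ≤ C * |c - (c + t)| ^ μ := hH _ _
      _ = C * t ^ μ := by rw [show c - (c + t) = -t by ring, abs_neg, abs_of_pos ht']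
  have ht : Tendsto (fun t : ℝ => C * t ^ μ) (𝓝[>] (0:ℝ)) (𝓝 0) := by
    have h4 := (Real.continuousAt_rpow_const 0 μ (Or.inr hμ0.le)).tendsto
    rw [Real.zero_rpow hμ0.ne'] at h4
    have := (h4.mono_left (nhdsWithin_le_nhds (s := Set.Ioi (0:ℝ)))).const_mul C
    simpa using this
  have : |n c| ≤ 0 := ge_of_tendsto ht hb
  exact abs_eq_zero.mp (le_antisymm this (abs_nonneg _))

lemma n_bound (hC : 0 < C) (hμ0 : 0 < μ) {Λ : ℝ} (hΛ : 0 < Λ)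
    (hH : ∀ x y : ℝ, |n x - n y| ≤ C * |x - y| ^ μ)
    (hsupp : ∀ s : ℝ, s ∉ Set.Icc (-Λ) Λ → n s = 0) (x : ℝ) :
    |n x| ≤ C * (2 * Λ + 1) ^ μ := by
  by_cases hx : x ∈ Set.Icc (-Λ) Λ
  · have h1 : n (Λ + 1) = 0 := hsupp _ (by simp only [Set.mem_Icc, not_and, not_le]; intro h; linarith)
    calc |n x| = |n x - n (Λ + 1)| := by rw [h1, sub_zero]
      _ ≤ C * |x - (Λ + 1)| ^ μ := hH _ _
      _ ≤ C * (2 * Λ + 1) ^ μ := by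
          have h2 : |x - (Λ + 1)| ≤ 2 * Λ + 1 := by
            rw [abs_le]; exact ⟨by linarith [hx.1], by linarith [hx.2]⟩
          exact mul_le_mul_of_nonneg_left
            (Real.rpow_le_rpow (abs_nonneg _) h2 hμ0.le) hC.le
  · rw [hsupp x hx, abs_zero]; positivity

lemma logCWA (c : ℝ) (p : ℂ) (hp : 0 ≤ p.im) (hne : p ≠ (c : ℂ)) :
    ContinuousWithinAt (fun z : ℂ => Complex.log (z - (c : ℂ))) {z : ℂ | 0 ≤ z.im} p := by
  by_cases hs : p - (c : ℂ) ∈ Complex.slitPlane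
  · exact (ContinuousAt.comp (g := Complex.log) (f := fun z : ℂ => z - (c : ℂ))
      (continuousAt_clog hs)
      ((continuous_sub_right ((c : ℂ))).continuousAt)).continuousWithinAt
  · rw [Complex.mem_slitPlane_iff] at hs
    push_neg at hs
    have him : (p - (c : ℂ)).im = 0 := hs.2
    have him' : p.im = 0 := by simpa using him
    have hre : (p - (c : ℂ)).re < 0 := by
      rcases lt_or_eq_of_le hs.1 with h | h
      · exact h
      · exfalso; apply hne; apply Complex.ext <;> simp_all
        linarith [h]
    have hmaps : Set.MapsTo (fun z : ℂ => z - (c : ℂ)) {z : ℂ | 0 ≤ z.im} {z : ℂ | 0 ≤ z.im} :=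
      fun z hz => by simpa using hz
    exact ContinuousWithinAt.comp (g := Complex.log) (f := fun z : ℂ => z - (c : ℂ))
      (Complex.continuousWithinAt_log_of_re_neg_of_im_zero hre him)
      ((continuous_sub_right ((c : ℂ))).continuousWithinAt) hmaps

lemma tendsto_mul_log (hC : 0 < C) (hμ0 : 0 < μ)
    (hH : ∀ x y : ℝ, |n x - n y| ≤ C * |x - y| ^ μ) (c : ℝ) (hc : n c = 0) :
    Tendsto (fun z : ℂ => (n z.re : ℂ) * Complex.log (z - (c : ℂ)))
      (𝓝[{z : ℂ | 0 ≤ z.im} \ {(c : ℂ)}] (c : ℂ)) (𝓝 0) := by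
  set ψ : ℝ → ℝ := fun t => C * |Real.log t * t ^ μ| + C * Real.pi * t ^ μ with hψ
  have hb : ∀ z : ℂ, z ≠ (c : ℂ) →
      ‖(n z.re : ℂ) * Complex.log (z - (c : ℂ))‖ ≤ ψ ‖z - (c : ℂ)‖ := by
    intro z hz
    have h0 : 0 < ‖z - (c : ℂ)‖ := by
      rw [norm_pos_iff]; exact sub_ne_zero.2 hz
    have h1 : |n z.re| ≤ C * ‖z - (c : ℂ)‖ ^ μ := by
      calc |n z.re| = |n z.re - n c| := by rw [hc, sub_zero]
        _ ≤ C * |z.re - c| ^ μ := hH _ _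
        _ ≤ C * ‖z - (c : ℂ)‖ ^ μ := by
            refine mul_le_mul_of_nonneg_left
              (Real.rpow_le_rpow (abs_nonneg _) ?_ hμ0.le) hC.le
            calc |z.re - c| = |(z - (c : ℂ)).re| := by simp
              _ ≤ ‖z - (c : ℂ)‖ := Complex.abs_re_le_norm _
    have h2 : ‖Complex.log (z - (c : ℂ))‖ ≤ |Real.log ‖z - (c : ℂ)‖| + Real.pi := by
      simpa using norm_log_le (z - (c : ℂ))
    calc ‖(n z.re : ℂ) * Complex.log (z - (c : ℂ))‖
        = |n z.re| * ‖Complex.log (z - (c : ℂ))‖ := by rw [norm_mul, Complex.norm_real, Real.norm_eq_abs]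
      _ ≤ (C * ‖z - (c : ℂ)‖ ^ μ) * (|Real.log ‖z - (c : ℂ)‖| + Real.pi) := by
          refine mul_le_mul h1 h2 (norm_nonneg _) (by positivity)
      _ = ψ ‖z - (c : ℂ)‖ := by
          simp only [hψ]
          have : |Real.log ‖z - (c : ℂ)‖ * ‖z - (c : ℂ)‖ ^ μ|
              = |Real.log ‖z - (c : ℂ)‖| * ‖z - (c : ℂ)‖ ^ μ := by
            rw [abs_mul, abs_of_nonneg (Real.rpow_nonneg (norm_nonneg _) μ)]
          rw [this]; ring
  have hψt : Tendsto ψ (𝓝[>] (0:ℝ)) (𝓝 0) := by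
    have h1 := (tendsto_log_mul_rpow_nhdsGT_zero hμ0).abs
    have h2 : Tendsto (fun t : ℝ => t ^ μ) (𝓝[>] (0:ℝ)) (𝓝 0) := by
      have h4 := (Real.continuousAt_rpow_const 0 μ (Or.inr hμ0.le)).tendsto
      rw [Real.zero_rpow hμ0.ne'] at h4
      exact h4.mono_left nhdsWithin_le_nhds
    have := (h1.const_mul C).add (h2.const_mul (C * Real.pi))
    simpa [hψ, abs_mul] using this
  have hν : Tendsto (fun z : ℂ => ‖z - (c : ℂ)‖)
      (𝓝[{z : ℂ | 0 ≤ z.im} \ {(c : ℂ)}] (c : ℂ)) (𝓝[>] (0:ℝ)) := by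
    rw [tendsto_nhdsWithin_iff]
    constructor
    · have h : Continuous fun z : ℂ => ‖z - (c : ℂ)‖ :=
        (continuous_id.sub continuous_const).norm
      have := (h.tendsto (c : ℂ)).mono_left
        (nhdsWithin_le_nhds (s := {z : ℂ | 0 ≤ z.im} \ {(c : ℂ)}))
      simpa using this
    · filter_upwards [self_mem_nhdsWithin] with z hz
      have : z ≠ (c : ℂ) := fun h => hz.2 (by simp [h])
      rw [Set.mem_Ioi, norm_pos_iff]
      exact sub_ne_zero.2 this
  refine squeeze_zero_norm' ?_ (hψt.comp hν)
  filter_upwards [self_mem_nhdsWithin] with z hz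
  exact hb z (fun h => hz.2 (by simp [h]))


lemma F_continuous (hC : 0 < C) (hμ0 : 0 < μ) (hμ1 : μ ≤ 1) {Λ M : ℝ} (hΛ : 0 < Λ)
    (hH : ∀ x y : ℝ, |n x - n y| ≤ C * |x - y| ^ μ) (hn : Continuous n)
    (hM : ∀ x : ℝ, |n x| ≤ M) :
    Continuous (fun z : ℂ => ∫ s in Icc (-Λ) Λ, ((n s : ℂ) - (n z.re : ℂ)) / ((s : ℂ) - z)) := by
  have hM0 : 0 ≤ M := le_trans (abs_nonneg _) (hM 0)
  set F := fun z : ℂ => ∫ s in Icc (-Λ) Λ, ((n s : ℂ) - (n z.re : ℂ)) / ((s : ℂ) - z) with hF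
  rw [Metric.continuous_iff]
  intro z₀ ε hε
  set x₀ := z₀.re with hx₀
  -- choose ρ
  have t1 : Tendsto (fun r : ℝ => C * (2 * ((3 * r) ^ μ / μ))) (𝓝[>] (0:ℝ)) (𝓝 0) := by
    have h4 := (Real.continuousAt_rpow_const 0 μ (Or.inr hμ0.le)).tendsto
    rw [Real.zero_rpow hμ0.ne'] at h4
    have h5 : Tendsto (fun r : ℝ => 3 * r) (𝓝[>] (0:ℝ)) (𝓝 0) := by
      have h6 : Continuous fun r : ℝ => 3 * r := continuous_const.mul continuous_id
      have := (h6.tendsto 0).mono_left (nhdsWithin_le_nhds (s := Set.Ioi (0:ℝ)))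
      simpa using this
    have := (((h4.comp h5).div_const μ).const_mul 2).const_mul C
    simpa using this
  obtain ⟨ρ, hρε, hρ⟩ :=
    ((t1.eventually_lt_const (show (0:ℝ) < ε / 8 by linarith)).and self_mem_nhdsWithin).exists

  -- choose δ
  set κ : ℝ → ℝ := fun d => C * d ^ μ / ρ + 2 * M * d / (ρ * (2 * ρ)) with hκ
  have t2 : Tendsto (fun d : ℝ => κ d * (2 * Λ)) (𝓝[>] (0:ℝ)) (𝓝 0) := by
    have h4 := (Real.continuousAt_rpow_const 0 μ (Or.inr hμ0.le)).tendsto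
    rw [Real.zero_rpow hμ0.ne'] at h4
    have h4' := h4.mono_left (nhdsWithin_le_nhds (s := Set.Ioi (0:ℝ)))
    have h5 : Tendsto (fun d : ℝ => d) (𝓝[>] (0:ℝ)) (𝓝 0) :=
      tendsto_id.mono_left nhdsWithin_le_nhds
    have := ((((h4'.const_mul C).div_const ρ).add
      (((h5.const_mul (2 * M)).div_const (ρ * (2 * ρ))))).mul_const (2 * Λ))
    simpa using this
  obtain ⟨δ, hδε, hδmem⟩ :=
    ((t2.eventually_lt_const (show (0:ℝ) < ε / 4 by linarith)).and
      (eventually_of_mem (Ioo_mem_nhdsGT_of_mem ⟨le_refl (0:ℝ), hρ⟩) fun d hd => hd)).exists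
  obtain ⟨hδ0, hδρ⟩ := hδmem
  refine ⟨δ, hδ0, fun z hz => ?_⟩
  set x := z.re with hx
  have hxx₀ : |x - x₀| < δ := by
    have h1 : |x - x₀| ≤ ‖z - z₀‖ := by
      have := Complex.abs_re_le_norm (z - z₀)
      simpa using this
    rw [Complex.dist_eq] at hz
    linarith
  -- sets
  set A := Icc (-Λ) Λ ∩ Icc (x₀ - 2 * ρ) (x₀ + 2 * ρ) with hA
  set B := Icc (-Λ) Λ \ Icc (x₀ - 2 * ρ) (x₀ + 2 * ρ) with hB
  have hic : Icc (-Λ) Λ = A ∪ B := (Set.inter_union_diff _ _).symm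
  have hdisj : Disjoint A B :=
    Set.disjoint_sdiff_right.mono_left Set.inter_subset_right
  have hBmeas : MeasurableSet B := measurableSet_Icc.diff measurableSet_Icc
  have hAmeas : MeasurableSet A := measurableSet_Icc.inter measurableSet_Icc
  have hIcc : ∀ w : ℂ,
      IntegrableOn (fun s : ℝ => ((n s : ℂ) - (n w.re : ℂ)) / ((s : ℂ) - w)) (Icc (-Λ) Λ) :=
    fun w => g_integrableOn hC hμ0 hμ1 hH hn w (-Λ) Λ
  have hIA : ∀ w : ℂ,
      IntegrableOn (fun s : ℝ => ((n s : ℂ) - (n w.re : ℂ)) / ((s : ℂ) - w)) A :=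
    fun w => (hIcc w).mono_set Set.inter_subset_left
  have hIB : ∀ w : ℂ,
      IntegrableOn (fun s : ℝ => ((n s : ℂ) - (n w.re : ℂ)) / ((s : ℂ) - w)) B :=
    fun w => (hIcc w).mono_set Set.diff_subset
  have hsplit : ∀ w : ℂ, F w =
      (∫ s in A, ((n s : ℂ) - (n w.re : ℂ)) / ((s : ℂ) - w)) +
      ∫ s in B, ((n s : ℂ) - (n w.re : ℂ)) / ((s : ℂ) - w) := by
    intro w
    rw [hF]
    simp only []
    rw [hic, setIntegral_union hdisj hBmeas (hIA w) (hIB w)]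
  -- A estimate
  have hAest : ∀ w : ℂ, |w.re - x₀| ≤ ρ →
      ‖∫ s in A, ((n s : ℂ) - (n w.re : ℂ)) / ((s : ℂ) - w)‖ < ε / 8 := by
    intro w hw
    rw [abs_le] at hw
    have hsub : A ⊆ Icc (w.re - 3 * ρ) (w.re + 3 * ρ) := by
      rintro s ⟨-, hs1, hs2⟩
      exact ⟨by linarith, by linarith⟩
    have hIdom : IntegrableOn (fun s : ℝ => C * |s - w.re| ^ (μ - 1))
        (Icc (w.re - 3 * ρ) (w.re + 3 * ρ)) :=
      (abs_rpow_integrableOn (e := μ - 1) (by linarith) w.re _ _).const_mul C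
    calc ‖∫ s in A, ((n s : ℂ) - (n w.re : ℂ)) / ((s : ℂ) - w)‖
        ≤ ∫ s in A, ‖((n s : ℂ) - (n w.re : ℂ)) / ((s : ℂ) - w)‖ :=
          norm_integral_le_integral_norm _
      _ ≤ ∫ s in A, C * |s - w.re| ^ (μ - 1) := by
          refine setIntegral_mono_on (hIA w).norm (hIdom.mono_set hsub) hAmeas ?_
          exact fun s _ => bound1 hC hμ0 hH w s
      _ ≤ ∫ s in Icc (w.re - 3 * ρ) (w.re + 3 * ρ), C * |s - w.re| ^ (μ - 1) := by
          refine setIntegral_mono_set hIdom ?_ (HasSubset.Subset.eventuallyLE hsub)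
          exact Filter.Eventually.of_forall fun s => by positivity
      _ = C * (2 * ((3 * ρ) ^ μ / μ)) := by
          rw [MeasureTheory.integral_const_mul, integral_abs_rpow hμ0 w.re (3 * ρ) (by positivity)]
      _ < ε / 8 := hρε
  -- B pointwise estimate
  have hBpt : ∀ s ∈ B,
      ‖((n s : ℂ) - (n x : ℂ)) / ((s : ℂ) - z) -
        ((n s : ℂ) - (n x₀ : ℂ)) / ((s : ℂ) - z₀)‖ ≤ κ δ := by
    rintro s ⟨hs1, hs2⟩
    have hsx₀ : 2 * ρ ≤ |s - x₀| := by
      rw [Set.mem_Icc, not_and_or] at hs2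
      rcases hs2 with h | h
      · push_neg at h
        rw [abs_sub_comm]
        calc 2 * ρ ≤ x₀ - s := by linarith
          _ ≤ |x₀ - s| := le_abs_self _
      · push_neg at h
        calc 2 * ρ ≤ s - x₀ := by linarith
          _ ≤ |s - x₀| := le_abs_self _
    have hsx : ρ ≤ |s - x| := by
      have h1 : |s - x₀| ≤ |s - x| + |x - x₀| := abs_sub_le s x x₀
      linarith
    have hu : ρ ≤ ‖(s : ℂ) - z‖ := by
      refine le_trans hsx ?_
      calc |s - x| = |((s : ℂ) - z).re| := by simp [hx]
        _ ≤ ‖(s : ℂ) - z‖ := Complex.abs_re_le_norm _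
    have hv : 2 * ρ ≤ ‖(s : ℂ) - z₀‖ := by
      refine le_trans hsx₀ ?_
      calc |s - x₀| = |((s : ℂ) - z₀).re| := by simp [hx₀]
        _ ≤ ‖(s : ℂ) - z₀‖ := Complex.abs_re_le_norm _
    have hune : ((s : ℂ) - z) ≠ 0 := by
      intro h; rw [h, norm_zero] at hu; linarith
    have hvne : ((s : ℂ) - z₀) ≠ 0 := by
      intro h; rw [h, norm_zero] at hv; linarith
    have hid : ((n s : ℂ) - (n x : ℂ)) / ((s : ℂ) - z) -
        ((n s : ℂ) - (n x₀ : ℂ)) / ((s : ℂ) - z₀)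
        = ((n x₀ : ℂ) - (n x : ℂ)) / ((s : ℂ) - z) +
          ((n s : ℂ) - (n x₀ : ℂ)) * ((z - z₀) / (((s : ℂ) - z) * ((s : ℂ) - z₀))) := by
      field_simp
      ring
    rw [hid]
    have hterm1 : ‖((n x₀ : ℂ) - (n x : ℂ)) / ((s : ℂ) - z)‖ ≤ C * δ ^ μ / ρ := by
      rw [norm_div]
      refine div_le_div₀ (by positivity) ?_ hρ hu
      rw [← Complex.ofReal_sub, Complex.norm_real, Real.norm_eq_abs]
      calc |n x₀ - n x| ≤ C * |x₀ - x| ^ μ := hH _ _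
        _ ≤ C * δ ^ μ := by
            refine mul_le_mul_of_nonneg_left
              (Real.rpow_le_rpow (abs_nonneg _) ?_ hμ0.le) hC.le
            rw [abs_sub_comm]; linarith
    have hterm2 : ‖((n s : ℂ) - (n x₀ : ℂ)) *
        ((z - z₀) / (((s : ℂ) - z) * ((s : ℂ) - z₀)))‖ ≤ 2 * M * δ / (ρ * (2 * ρ)) := by
      rw [norm_mul, norm_div, norm_mul]
      have h1 : ‖(n s : ℂ) - (n x₀ : ℂ)‖ ≤ 2 * M := by
        rw [← Complex.ofReal_sub, Complex.norm_real, Real.norm_eq_abs]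
        calc |n s - n x₀| ≤ |n s| + |n x₀| := abs_sub _ _
          _ ≤ 2 * M := by linarith [hM s, hM x₀]
      have h2 : ‖z - z₀‖ / (‖(s : ℂ) - z‖ * ‖(s : ℂ) - z₀‖) ≤ δ / (ρ * (2 * ρ)) := by
        refine div_le_div₀ (by positivity) ?_ (by positivity) ?_
        · rw [← dist_eq_norm]
          exact hz.le
        · exact mul_le_mul hu hv (by positivity) (norm_nonneg _)
      calc ‖(n s : ℂ) - (n x₀ : ℂ)‖ * (‖z - z₀‖ / (‖(s : ℂ) - z‖ * ‖(s : ℂ) - z₀‖))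
          ≤ (2 * M) * (δ / (ρ * (2 * ρ))) :=
            mul_le_mul h1 h2 (by positivity) (by linarith)
        _ = 2 * M * δ / (ρ * (2 * ρ)) := by ring
    calc ‖_ + _‖ ≤ _ + _ := norm_add_le _ _
      _ ≤ C * δ ^ μ / ρ + 2 * M * δ / (ρ * (2 * ρ)) := add_le_add hterm1 hterm2
      _ = κ δ := rfl
  -- B estimate
  have hκ0 : 0 ≤ κ δ := by
    rw [hκ]; positivity
  have hBfin : volume B < ⊤ :=
    lt_of_le_of_lt (measure_mono Set.diff_subset) measure_Icc_lt_top
  have hBest : ‖∫ s in B, (((n s : ℂ) - (n x : ℂ)) / ((s : ℂ) - z) -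
      ((n s : ℂ) - (n x₀ : ℂ)) / ((s : ℂ) - z₀))‖ ≤ κ δ * (2 * Λ) := by
    refine le_trans (norm_setIntegral_le_of_norm_le_const hBfin hBpt) ?_
    refine mul_le_mul_of_nonneg_left ?_ hκ0
    show (volume B).toReal ≤ 2 * Λ
    have h1 : (volume B).toReal ≤ (volume (Icc (-Λ) Λ)).toReal :=
      ENNReal.toReal_mono measure_Icc_lt_top.ne (measure_mono Set.diff_subset)
    rw [Real.volume_Icc] at h1
    rw [ENNReal.toReal_ofReal (by linarith)] at h1
    linarith
  -- assemble
  rw [dist_eq_norm, hsplit z, hsplit z₀]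
  have hintsub : (∫ s in B, ((n s : ℂ) - (n x : ℂ)) / ((s : ℂ) - z)) -
      (∫ s in B, ((n s : ℂ) - (n x₀ : ℂ)) / ((s : ℂ) - z₀)) =
      ∫ s in B, (((n s : ℂ) - (n x : ℂ)) / ((s : ℂ) - z) -
        ((n s : ℂ) - (n x₀ : ℂ)) / ((s : ℂ) - z₀)) :=
    (integral_sub (hIB z) (hIB z₀)).symm
  have hAz := hAest z (by linarith [hxx₀])
  have hAz₀ := hAest z₀ (by simp [hx₀]; linarith)
  calc ‖((∫ s in A, ((n s : ℂ) - (n x : ℂ)) / ((s : ℂ) - z)) +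
        ∫ s in B, ((n s : ℂ) - (n x : ℂ)) / ((s : ℂ) - z)) -
        ((∫ s in A, ((n s : ℂ) - (n x₀ : ℂ)) / ((s : ℂ) - z₀)) +
        ∫ s in B, ((n s : ℂ) - (n x₀ : ℂ)) / ((s : ℂ) - z₀))‖
      = ‖(∫ s in A, ((n s : ℂ) - (n x : ℂ)) / ((s : ℂ) - z)) +
        (-(∫ s in A, ((n s : ℂ) - (n x₀ : ℂ)) / ((s : ℂ) - z₀)) +
        (∫ s in B, (((n s : ℂ) - (n x : ℂ)) / ((s : ℂ) - z) -
          ((n s : ℂ) - (n x₀ : ℂ)) / ((s : ℂ) - z₀))))‖ := by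
        rw [← hintsub]; congr 1; ring
    _ ≤ ‖∫ s in A, ((n s : ℂ) - (n x : ℂ)) / ((s : ℂ) - z)‖ +
        (‖∫ s in A, ((n s : ℂ) - (n x₀ : ℂ)) / ((s : ℂ) - z₀)‖ +
        ‖∫ s in B, (((n s : ℂ) - (n x : ℂ)) / ((s : ℂ) - z) -
          ((n s : ℂ) - (n x₀ : ℂ)) / ((s : ℂ) - z₀))‖) := by
        refine (norm_add_le _ _).trans ?_
        refine add_le_add le_rfl ?_
        refine (norm_add_le _ _).trans ?_
        rw [norm_neg]
    _ < ε := by linarith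

end PlemeljAux

/-- **Plemelj–Privalov continuity of boundary values.**
The Cauchy integral `∫_{−Λ}^{Λ} n(s)/(s − z) ds` of a compactly supported
Hölder density extends continuously to the closed upper half-plane. -/
theorem cauchy_integral_continuous_boundary_values
    (Λ : ℝ) (hΛ : 0 < Λ) (n : ℝ → ℝ)
    (hsupp : ∀ s : ℝ, s ∉ Set.Icc (-Λ) Λ → n s = 0)
    (hHolder : ∃ C > (0 : ℝ), ∃ μ : ℝ, 0 < μ ∧ μ ≤ 1 ∧
      ∀ x y : ℝ, |n x - n y| ≤ C * |x - y| ^ μ) :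
    ∃ G : ℂ → ℂ, ContinuousOn G {z : ℂ | 0 ≤ z.im} ∧
      ∀ z : ℂ, 0 < z.im →
        G z = ∫ s in Set.Icc (-Λ) Λ, (n s : ℂ) / ((s : ℂ) - z) := by
  obtain ⟨C, hC, μ, hμ0, hμ1, hH⟩ := hHolder
  have hn : Continuous n := PlemeljAux.n_continuous hC hμ0 hH
  have hM : ∀ x : ℝ, |n x| ≤ C * (2 * Λ + 1) ^ μ := PlemeljAux.n_bound hC hμ0 hΛ hH hsupp
  have hnΛ : n Λ = 0 := by
    refine PlemeljAux.n_edge_zero hC hμ0 hH (c := Λ) fun t ht => hsupp _ ?_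
    simp only [Set.mem_Icc, not_and, not_le]
    intro h; linarith
  have hnmΛ : n (-Λ) = 0 := by
    have hH' : ∀ x y : ℝ, |n (-x) - n (-y)| ≤ C * |x - y| ^ μ := by
      intro x y
      have := hH (-x) (-y)
      have habs : |(-x) - (-y)| = |x - y| := by rw [show (-x) - (-y) = -(x - y) by ring, abs_neg]
      rwa [habs] at this
    have := PlemeljAux.n_edge_zero (n := fun x => n (-x)) hC hμ0 hH' (c := Λ)
      (fun t ht => hsupp _ (by simp only [Set.mem_Icc, not_and, not_le]; intro h; linarith))
    simpa using this
  set F := fun z : ℂ => ∫ s in Set.Icc (-Λ) Λ, ((n s : ℂ) - (n z.re : ℂ)) / ((s : ℂ) - z)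
    with hFdef
  have hFc : Continuous F := PlemeljAux.F_continuous hC hμ0 hμ1 hΛ hH hn hM
  have hnre : Continuous fun z : ℂ => (n z.re : ℂ) :=
    Complex.continuous_ofReal.comp (hn.comp Complex.continuous_re)
  have hcont2 : ∀ c : ℝ, n c = 0 → ∀ p : ℂ, 0 ≤ p.im →
      ContinuousWithinAt (fun z : ℂ => (n z.re : ℂ) * Complex.log (z - (c : ℂ)))
        {z : ℂ | 0 ≤ z.im} p := by
    intro c hc p hp
    by_cases hpc : p = (c : ℂ)
    · subst hpc
      rw [← continuousWithinAt_diff_self]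
      have h := PlemeljAux.tendsto_mul_log hC hμ0 hH c hc
      have h2 : Tendsto (fun z : ℂ => (n z.re : ℂ) * Complex.log (z - (c : ℂ)))
          (𝓝[{z : ℂ | 0 ≤ z.im} \ {(c : ℂ)}] (c : ℂ))
          (𝓝 ((fun z : ℂ => (n z.re : ℂ) * Complex.log (z - (c : ℂ))) ((c : ℂ)))) := by
        rw [show (fun z : ℂ => (n z.re : ℂ) * Complex.log (z - (c : ℂ))) ((c : ℂ)) = 0 by
          simp [hc]]
        exact h
      exact h2
    · exact hnre.continuousWithinAt.mul (PlemeljAux.logCWA c p hp hpc)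
  refine ⟨fun z => F z + (n z.re : ℂ) * Complex.log (z - (Λ : ℂ)) -
      (n z.re : ℂ) * Complex.log (z - ((-Λ : ℝ) : ℂ)), ?_, ?_⟩
  · intro p hp
    exact (hFc.continuousWithinAt.add (hcont2 Λ hnΛ p hp)).sub (hcont2 (-Λ) hnmΛ p hp)
  · intro z hz
    have hzne : ∀ s : ℝ, ((s : ℂ) - z) ≠ 0 := by
      intro s h
      have h2 : ((s : ℂ) - z).im = 0 := by rw [h]; simp
      simp only [Complex.sub_im, Complex.ofReal_im, zero_sub, neg_eq_zero] at h2
      linarith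
    have hc1 : Continuous fun s : ℝ => ((s : ℂ) - z) :=
      Complex.continuous_ofReal.sub continuous_const
    have hcdiv : Continuous fun s : ℝ => ((s : ℂ) - z)⁻¹ := hc1.inv₀ hzne
    have hint2 : IntegrableOn (fun s : ℝ => ((n s : ℂ) - (n z.re : ℂ)) / ((s : ℂ) - z))
        (Set.Icc (-Λ) Λ) := PlemeljAux.g_integrableOn hC hμ0 hμ1 hH hn z (-Λ) Λ
    have hint3 : IntegrableOn (fun s : ℝ => (n z.re : ℂ) * ((s : ℂ) - z)⁻¹)
        (Set.Icc (-Λ) Λ) := (continuous_const.mul hcdiv).integrableOn_Icc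
    have hFTC : (∫ s in Set.Icc (-Λ) Λ, ((s : ℂ) - z)⁻¹) =
        Complex.log (z - (Λ : ℂ)) - Complex.log (z - ((-Λ : ℝ) : ℂ)) := by
      rw [MeasureTheory.integral_Icc_eq_integral_Ioc,
        ← intervalIntegral.integral_of_le (by linarith : -Λ ≤ Λ)]
      have hderiv : ∀ s ∈ Set.uIcc (-Λ) Λ,
          HasDerivAt (fun t : ℝ => Complex.log (z - (t : ℂ))) (((s : ℂ) - z)⁻¹) s := by
        intro s hs
        have hmem : z - (s : ℂ) ∈ Complex.slitPlane := by
          refine Or.inr ?_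
          simp only [Complex.sub_im, Complex.ofReal_im, sub_zero]
          linarith
        have hinner : HasDerivAt (fun t : ℝ => z - (t : ℂ)) (-1) s := by
          simpa using (Complex.ofRealCLM.hasDerivAt (x := s)).const_sub z
        have hcomp := (Complex.hasDerivAt_log hmem).comp s hinner
        have : HasDerivAt (fun t : ℝ => Complex.log (z - (t : ℂ)))
            ((z - (s : ℂ))⁻¹ * (-1)) s := hcomp
        convert this using 1
        rw [mul_neg_one, ← inv_neg, neg_sub]
      rw [intervalIntegral.integral_eq_sub_of_hasDerivAt hderiv
        (hcdiv.intervalIntegrable _ _)]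
    have hid : ∀ s : ℝ, (n s : ℂ) / ((s : ℂ) - z) =
        ((n s : ℂ) - (n z.re : ℂ)) / ((s : ℂ) - z) + (n z.re : ℂ) * ((s : ℂ) - z)⁻¹ := by
      intro s
      field_simp
      ring
    have hsum : (∫ s in Set.Icc (-Λ) Λ, (n s : ℂ) / ((s : ℂ) - z)) =
        F z + (n z.re : ℂ) * ∫ s in Set.Icc (-Λ) Λ, ((s : ℂ) - z)⁻¹ := by
      rw [show (fun s : ℝ => (n s : ℂ) / ((s : ℂ) - z)) = fun s : ℝ =>
        ((n s : ℂ) - (n z.re : ℂ)) / ((s : ℂ) - z) + (n z.re : ℂ) * ((s : ℂ) - z)⁻¹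
        from funext hid]
      rw [MeasureTheory.integral_add hint2 hint3, MeasureTheory.integral_const_mul]
    rw [hsum, hFTC]
    ring
end

section
/- Let n : ℝ → ℝ be a nonnegative integrable function with ∫_ℝ n(s) ds = 1. For z ∈ ℂ with Im z ≠ 0 and t, x ∈ ℝ, define η(z) := z + (1/4)·∫_ℝ n(s)/(s − z) ds and θ(t, x, z) := z·t − η(z)·x. Then Re(i·θ(t, x, z)) = (Im z)·(x − t + (x/4)·∫_ℝ n(s)/|s − z|² ds). In particular, if 0 ≤ t ≤ x and x > 0, then Re(i·θ(t, x, z)) > 0 when Im z > 0 and Re(i·θ(t, x, z)) < 0 when Im z < 0, i.e., sgn(Re(iθ(t,x,z))) = sgn(Im z). -/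
open MeasureTheory

/-- Real part of the phase `iθ(t,x,z)`, where `θ(t,x,z) = zt − η(z)x` and
`η(z) = z + (1/4)∫ n(s)/(s − z) ds`:
`Re(iθ) = Im z · (x − t + (x/4)∫ n(s)/|s − z|² ds)`; in the causality region
`0 ≤ t ≤ x`, `x > 0`, its sign equals the sign of `Im z`. -/
theorem phase_function_real_part_sign
    (n : ℝ → ℝ) (hn : ∀ s, 0 ≤ n s) (hni : Integrable n)
    (hn1 : (∫ s : ℝ, n s) = 1) :
    ∀ (z : ℂ), z.im ≠ 0 → ∀ t x : ℝ,
      let η : ℂ := z + (1 / 4 : ℂ) * ∫ s : ℝ, (n s : ℂ) / ((s : ℂ) - z)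
      let θ : ℂ := z * (t : ℂ) - η * (x : ℂ)
      (Complex.I * θ).re
          = z.im * (x - t + (x / 4) * ∫ s : ℝ, n s / Complex.normSq ((s : ℂ) - z)) ∧
      (0 ≤ t → t ≤ x → 0 < x →
        ((0 < z.im → 0 < (Complex.I * θ).re) ∧
          (z.im < 0 → (Complex.I * θ).re < 0))) := by
  intro z hz t x η θ
  have hne : ∀ s : ℝ, ((s : ℂ) - z) ≠ 0 := by
    intro s h
    apply hz
    have : ((s : ℂ) - z).im = 0 := by rw [h]; simp
    simpa using this.symm
  have hsq : ∀ s : ℝ, 0 < Complex.normSq ((s : ℂ) - z) :=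
    fun s => Complex.normSq_pos.2 (hne s)
  have hsqle : ∀ s : ℝ, z.im ^ 2 ≤ Complex.normSq ((s : ℂ) - z) := by
    intro s
    rw [Complex.normSq_apply]
    simp only [Complex.sub_im, Complex.ofReal_im, Complex.sub_re, Complex.ofReal_re]
    nlinarith [sq_nonneg (s - z.re)]
  -- real integrand
  set g : ℝ → ℝ := fun s => n s / Complex.normSq ((s : ℂ) - z) with hg
  have hgm : AEStronglyMeasurable g (volume : Measure ℝ) := by
    exact (hni.aestronglyMeasurable.aemeasurable.div
      (Continuous.aemeasurable (by continuity))).aestronglyMeasurable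
  have hgi : Integrable g := by
    refine Integrable.mono' (hni.mul_const ((z.im ^ 2)⁻¹)) hgm ?_
    filter_upwards with s
    rw [Real.norm_eq_abs, abs_of_nonneg (div_nonneg (hn s) (hsq s).le)]
    rw [div_eq_mul_inv]
    exact mul_le_mul_of_nonneg_left
      (inv_anti₀ (by positivity) (hsqle s)) (hn s)
  have hgnn : 0 ≤ g := fun s => div_nonneg (hn s) (hsq s).le
  -- complex integrand integrable
  have hfi : Integrable (fun s : ℝ => (n s : ℂ) / ((s : ℂ) - z)) := by
    refine Integrable.mono' (hni.mul_const (|z.im|⁻¹))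
      ?_ ?_
    · exact ((Complex.continuous_ofReal.comp_aestronglyMeasurable
          hni.aestronglyMeasurable).aemeasurable.div
          (Continuous.aemeasurable (by continuity))).aestronglyMeasurable
    · filter_upwards with s
      rw [norm_div]
      simp only [Complex.norm_real, Real.norm_eq_abs, abs_of_nonneg (hn s)]
      rw [div_eq_mul_inv]
      apply mul_le_mul_of_nonneg_left _ (hn s)
      apply inv_anti₀ (abs_pos.2 hz)
      calc |z.im| = |((s : ℂ) - z).im| := by simp
        _ ≤ ‖(s : ℂ) - z‖ := Complex.abs_im_le_norm _
  -- imaginary part of the complex integral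
  have him : (∫ s : ℝ, (n s : ℂ) / ((s : ℂ) - z)).im = z.im * ∫ s, g s := by
    have h1 : (∫ s : ℝ, (n s : ℂ) / ((s : ℂ) - z)).im
        = ∫ s : ℝ, ((n s : ℂ) / ((s : ℂ) - z)).im := (integral_im hfi).symm
    rw [h1, ← integral_const_mul]
    congr 1
    funext s
    rw [div_eq_mul_inv, Complex.mul_im]
    simp only [Complex.ofReal_re, Complex.ofReal_im, zero_mul, add_zero]
    rw [Complex.inv_im]
    simp only [Complex.sub_im, Complex.ofReal_im]
    field_simp [hg]
    ring
  set P : ℝ := ∫ s, g s with hP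
  have hkey : (Complex.I * θ).re = z.im * (x - t + (x / 4) * P) := by
    have : (Complex.I * θ).re = -θ.im := by
      simp [Complex.mul_re]
    rw [this]
    show -(z * (t : ℂ) - η * (x : ℂ)).im = _
    have hηim : η.im = z.im + (1 / 4) * (z.im * P) := by
      show (z + (1 / 4 : ℂ) * ∫ s : ℝ, (n s : ℂ) / ((s : ℂ) - z)).im = _
      rw [Complex.add_im, Complex.mul_im]
      simp [him]
    simp only [Complex.sub_im, Complex.mul_im, Complex.ofReal_re, Complex.ofReal_im,
      mul_zero, add_zero, zero_mul]
    rw [hηim]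
    ring
  refine ⟨hkey, fun ht htx hx => ?_⟩
  have hPpos : 0 < P := by
    rw [hP, integral_pos_iff_support_of_nonneg hgnn hgi]
    have hsupp : Function.support n ⊆ Function.support g := by
      intro s hs
      simp only [Function.mem_support, hg] at *
      exact div_ne_zero hs (hsq s).ne'
    have hnpos : 0 < ∫ s, n s := by rw [hn1]; norm_num
    have := (integral_pos_iff_support_of_nonneg hn hni).1 hnpos
    exact lt_of_lt_of_le this (measure_mono hsupp)
  have hC : 0 < x - t + (x / 4) * P := by nlinarith
  constructor
  · intro h; rw [hkey]; positivity
  · intro h; rw [hkey]; exact mul_neg_of_neg_of_pos h hC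
end
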